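/- arXiv:2508.05173 — 6 statements merged into one kernel-verified Lean document; each statement's English description precedes it below -/
import Mathlib

section
/- Let X be a countable alphabet, p a probability distribution on X, and X_1,...,X_n i.i.d. samples from p with empirical estimator p̂_u = #{i ≤ n : X_i = u}/n. Let m be a positive even integer, d = m/2, and let c_{k,m,n} (1 ≤ k ≤ d) be real coefficients satisfying the binomial central-moment identity. Then for every δ ∈ (0,1), with probability at least 1 − δ, sup_{u∈X} |p_u − p̂_u| ≤ (1/n) · δ^{−1/m} · ( Σ_{k=1}^{d} c_{k,m,n} Σ_{u∈X} p_u^k (1−p_u)^k )^{1/m}. -/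
open MeasureTheory ProbabilityTheory Finset

/-- The empirical (maximum likelihood) estimator `p̂_u = #{i ≤ n : X_i = u} / n`. -/
noncomputable def emp {𝒳 : Type*} [DecidableEq 𝒳] {Ω : Type*} {n : ℕ}
    (X : Fin n → Ω → 𝒳) (ω : Ω) (u : 𝒳) : ℝ :=
  ((Finset.univ.filter (fun i => X i ω = u)).card : ℝ) / n

/-- The coefficients `c k` (for `1 ≤ k ≤ d`) satisfy the binomial central-moment identity:
for every `θ ∈ [0,1]` and `Y ~ Bin(n, θ)`,
`E[(Y - nθ)^m] = ∑_{k=1}^d c k (θ(1-θ))^k`. -/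
def MomentIdentity (n m d : ℕ) (c : ℕ → ℝ) : Prop :=
  ∀ θ : ℝ, θ ∈ Set.Icc (0:ℝ) 1 →
    ∑ y ∈ Finset.range (n+1),
        (n.choose y : ℝ) * θ^y * (1-θ)^(n-y) * ((y:ℝ) - n*θ)^m
      = ∑ k ∈ Finset.Icc 1 d, c k * (θ*(1-θ))^k

/-!
By independence the count `N_u = n p̂_u` of each symbol is `Bin(n, p_u)`, so for even `m`
`E|p_u - p̂_u|^m = E[(N_u - n p_u)^m] / n^m = ∑_k c_k (p_u (1 - p_u))^k / n^m`.
Summing over `u` gives `E[∑_u |p_u - p̂_u|^m] = T / n^m` with `T = ∑_k c_k ∑_u p_u^k (1 - p_u)^k`.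
As `(sup_u |p_u - p̂_u|)^m` is at most that sum, Markov's inequality at the level `B^m`, where `B`
is the claimed bound and hence `B^m δ = T / n^m`, leaves probability at most `δ` to the event
`sup_u |p_u - p̂_u| > B`.
-/

open scoped ENNReal unitInterval

noncomputable def binomialCentralMoment (n m : ℕ) (θ : ℝ) : ℝ :=
  ∑ y ∈ range (n + 1), (n.choose y : ℝ) * θ ^ y * (1 - θ) ^ (n - y) * ((y : ℝ) - n * θ) ^ m

namespace ProbabilityTheory

variable {Ω α ι : Type*} [DecidableEq α] [Fintype ι] {X : ι → Ω → α} {u : α}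

lemma setOf_card_filter_eq_eq_biUnion (k : ℕ) :
    {ω | #(univ.filter (fun i => X i ω = u)) = k} =
      ⋃ S ∈ powersetCard k univ, {ω | univ.filter (fun i => X i ω = u) = S} := by
  ext ω
  simp

variable [DecidableEq ι]

lemma setOf_filter_eq_eq_iInter (S : Finset ι) :
    {ω | univ.filter (fun i => X i ω = u) = S} =
      ⋂ i, X i ⁻¹' (if i ∈ S then {u} else {u}ᶜ) := by
  ext ω
  simp only [Set.mem_ofPred_eq, Set.mem_iInter, Finset.ext_iff, mem_filter, mem_univ, true_and]
  refine forall_congr' fun i => ?_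
  split_ifs <;> simp_all

variable [MeasurableSpace Ω] {μ : Measure Ω} [MeasurableSpace α] [MeasurableSingletonClass α]

lemma measurableSet_filter_eq (hX : ∀ i, Measurable (X i)) (S : Finset ι) :
    MeasurableSet {ω | univ.filter (fun i => X i ω = u) = S} := by
  rw [setOf_filter_eq_eq_iInter]
  refine .iInter fun i => hX i ?_
  split_ifs
  exacts [measurableSet_singleton u, (measurableSet_singleton u).compl]

lemma measurable_card_filter (hX : ∀ i, Measurable (X i)) :
    Measurable fun ω => #(univ.filter (fun i => X i ω = u)) :=
  measurable_to_countable' fun k => by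
    simp only [Set.preimage, Set.mem_singleton_iff]
    rw [setOf_card_filter_eq_eq_biUnion]
    exact measurableSet_biUnion _ fun S _ => measurableSet_filter_eq hX S

variable [IsProbabilityMeasure μ]

lemma iIndepFun.measure_filter_eq (hind : iIndepFun X μ) (hX : ∀ i, Measurable (X i))
    {r : ℝ≥0∞} (hr : ∀ i, μ (X i ⁻¹' {u}) = r) (S : Finset ι) :
    μ {ω | univ.filter (fun i => X i ω = u) = S} = r ^ #S * (1 - r) ^ (Fintype.card ι - #S) := by
  have hcompl : ∀ i, μ (X i ⁻¹' {u}ᶜ) = 1 - r := fun i => by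
    rw [Set.preimage_compl, prob_compl_eq_one_sub (hX i (measurableSet_singleton u)), hr]
  rw [setOf_filter_eq_eq_iInter, hind.meas_iInter fun i => ⟨_, ?_, rfl⟩]
  · simp only [apply_ite, hr, hcompl, prod_ite, prod_const, filter_univ_mem]
    rw [← compl_filter, filter_univ_mem, card_compl]
  · split_ifs
    exacts [measurableSet_singleton u, (measurableSet_singleton u).compl]

lemma iIndepFun.measure_card_filter_eq (hind : iIndepFun X μ) (hX : ∀ i, Measurable (X i))
    {r : ℝ≥0∞} (hr : ∀ i, μ (X i ⁻¹' {u}) = r) (k : ℕ) :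
    μ {ω | #(univ.filter (fun i => X i ω = u)) = k} =
      (Fintype.card ι).choose k * r ^ k * (1 - r) ^ (Fintype.card ι - k) := by
  have hdisj : (powersetCard k (univ : Finset ι) : Set (Finset ι)).PairwiseDisjoint
      fun S => {ω | univ.filter (fun i => X i ω = u) = S} :=
    fun S _ T _ hST => Set.disjoint_left.2 fun ω hS hT => hST (hS.symm.trans hT)
  rw [setOf_card_filter_eq_eq_biUnion, measure_biUnion_finset hdisj
    fun S _ => measurableSet_filter_eq hX S]
  rw [sum_congr rfl fun S hS => by rw [hind.measure_filter_eq hX hr, (mem_powersetCard.1 hS).2],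
    sum_const, card_powersetCard, card_univ, nsmul_eq_mul, mul_assoc]

lemma iIndepFun.hasLaw_card_filter (hind : iIndepFun X μ) (hX : ∀ i, Measurable (X i)) {θ : I}
    (hθ : ∀ i, μ.real (X i ⁻¹' {u}) = θ) :
    HasLaw (fun ω => #(univ.filter (fun i => X i ω = u))) Bin(Fintype.card ι, θ) μ where
  aemeasurable := (measurable_card_filter hX).aemeasurable
  map_eq := Measure.ext_of_singleton fun k => by
    have hr : ∀ i, μ (X i ⁻¹' {u}) = ENNReal.ofReal θ := fun i => by
      rw [← hθ i, ofReal_measureReal]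
    rw [Measure.map_apply (measurable_card_filter hX) (measurableSet_singleton k),
      binomial_singleton,
      ENNReal.ofReal_mul (mul_nonneg (Nat.cast_nonneg _) (pow_nonneg (unitInterval.nonneg θ) _)),
      ENNReal.ofReal_mul (Nat.cast_nonneg _), ENNReal.ofReal_pow (unitInterval.nonneg θ),
      ENNReal.ofReal_pow (unitInterval.one_minus_nonneg θ),
      ENNReal.ofReal_sub _ (unitInterval.nonneg θ), ENNReal.ofReal_one, ENNReal.ofReal_natCast]
    exact hind.measure_card_filter_eq hX hr k

end ProbabilityTheory

section CentralMoment

variable {Ω : Type*} [MeasurableSpace Ω] {μ : Measure Ω} {n m : ℕ}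

lemma binomialCentralMoment_nonneg (hm : Even m) (θ : I) : 0 ≤ binomialCentralMoment n m θ :=
  sum_nonneg fun _ _ => mul_nonneg binomial_nonneg (hm.pow_nonneg _)

lemma lintegral_ofReal_sub_pow_of_hasLaw_binomial {N : Ω → ℕ} {θ : I}
    (hN : HasLaw N Bin(n, θ) μ) (hm : Even m) :
    ∫⁻ ω, ENNReal.ofReal (((N ω : ℝ) - n * θ) ^ m) ∂μ =
      ENNReal.ofReal (binomialCentralMoment n m θ) := by
  rw [hN.lintegral_comp (f := fun y : ℕ => ENNReal.ofReal (((y : ℝ) - n * θ) ^ m))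
    .of_discrete, ← ofReal_integral_eq_lintegral_ofReal (integrable_binomial _)
    (ae_of_all _ fun _ => hm.pow_nonneg _), integral_binomial, binomialCentralMoment,
    Nat.range_succ_eq_Iic]
  simp only [smul_eq_mul]

end CentralMoment

section Summation

variable {α : Type*} {p : α → ℝ}

lemma summable_pow_mul_one_sub_pow (hp : Summable p) (h0 : ∀ u, 0 ≤ p u) (h1 : ∀ u, p u ≤ 1)
    {k : ℕ} (hk : k ≠ 0) : Summable fun u => p u ^ k * (1 - p u) ^ k :=
  hp.of_nonneg_of_le
    (fun u => mul_nonneg (pow_nonneg (h0 u) k) (pow_nonneg (sub_nonneg.2 (h1 u)) k))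
    fun u => calc
      p u ^ k * (1 - p u) ^ k ≤ p u ^ k :=
        mul_le_of_le_one_right (pow_nonneg (h0 u) k)
          (pow_le_one₀ (sub_nonneg.2 (h1 u)) (by linarith [h0 u]))
      _ ≤ p u := pow_le_of_le_one (h0 u) (h1 u) hk

lemma hasSum_sum_mul_pow_mul_one_sub (hp : Summable p) (h0 : ∀ u, 0 ≤ p u) (h1 : ∀ u, p u ≤ 1)
    (c : ℕ → ℝ) (d : ℕ) :
    HasSum (fun u => ∑ k ∈ Icc 1 d, c k * (p u * (1 - p u)) ^ k)
      (∑ k ∈ Icc 1 d, c k * ∑' u, p u ^ k * (1 - p u) ^ k) :=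
  hasSum_sum fun k hk => by
    simp_rw [mul_pow]
    exact (summable_pow_mul_one_sub_pow hp h0 h1 (by grind)).hasSum.mul_left (c k)

lemma MomentIdentity.hasSum_binomialCentralMoment {n m d : ℕ} {c : ℕ → ℝ}
    (hc : MomentIdentity n m d c) (hp : Summable p) (h0 : ∀ u, 0 ≤ p u) (h1 : ∀ u, p u ≤ 1) :
    HasSum (fun u => binomialCentralMoment n m (p u))
      (∑ k ∈ Icc 1 d, c k * ∑' u, p u ^ k * (1 - p u) ^ k) := by
  convert hasSum_sum_mul_pow_mul_one_sub hp h0 h1 c d using 1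
  exact funext fun u => hc (p u) ⟨h0 u, h1 u⟩

end Summation

section Tail

variable {Ω : Type*} [MeasurableSpace Ω] {μ : Measure Ω}

lemma measure_lt_le_of_lintegral_le_mul {Y : Ω → ℝ≥0∞} (hY : AEMeasurable Y μ) {ε δ : ℝ≥0∞}
    (hε : ε ≠ ∞) (h : ∫⁻ ω, Y ω ∂μ ≤ ε * δ) : μ {ω | ε < Y ω} ≤ δ := by
  rcases eq_or_ne ε 0 with rfl | hε0
  · have hY0 : Y =ᵐ[μ] 0 := (lintegral_eq_zero_iff' hY).1 (by simpa using h)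
    have hnull : μ {ω | 0 < Y ω} = 0 :=
      measure_mono_null (fun _ hω => ne_of_gt hω) (ae_iff.1 hY0)
    exact hnull.trans_le zero_le
  calc μ {ω | ε < Y ω} ≤ μ {ω | ε ≤ Y ω} := measure_mono fun ω (hω : ε < Y ω) => hω.le
    _ ≤ (∫⁻ ω, Y ω ∂μ) / ε := meas_ge_le_lintegral_div hY hε0 hε
    _ ≤ δ := ENNReal.div_le_of_le_mul' h

lemma one_sub_le_prob_of_prob_compl_le [IsProbabilityMeasure μ] {s : Set Ω} {ε : ℝ≥0∞}
    (h : μ sᶜ ≤ ε) : 1 - ε ≤ μ s := by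
  have : 1 ≤ μ s + μ sᶜ := by
    rw [← measure_univ (μ := μ), ← Set.union_compl_self s]
    exact measure_union_le _ _
  exact (tsub_le_tsub_left h 1).trans (tsub_le_iff_right.2 this)

lemma ofReal_pow_lt_tsum_of_lt_iSup {α : Type*} {f : α → ℝ} {B : ℝ} {m : ℕ} (hB : 0 ≤ B)
    (hm : m ≠ 0) (h : B < ⨆ u, f u) : ENNReal.ofReal (B ^ m) < ∑' u, ENNReal.ofReal (f u ^ m) := by
  obtain ⟨u, hu⟩ : ∃ u, B < f u := by
    by_contra! hle
    exact h.not_ge (Real.iSup_le hle hB)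
  calc ENNReal.ofReal (B ^ m) < ENNReal.ofReal (f u ^ m) :=
        (ENNReal.ofReal_lt_ofReal_iff (pow_pos (hB.trans_lt hu) m)).2 (pow_lt_pow_left₀ hu hB hm)
    _ ≤ ∑' u, ENNReal.ofReal (f u ^ m) := ENNReal.le_tsum u

end Tail

lemma mul_rpow_one_div_pow_mul {δ T : ℝ} (x : ℝ) (hδ : 0 < δ) (hT : 0 ≤ T) {m : ℕ}
    (hm : m ≠ 0) :
    (x * δ ^ (-(1:ℝ) / m) * T ^ ((1:ℝ) / m)) ^ m * δ = x ^ m * T := by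
  rw [mul_pow, mul_pow, ← Real.rpow_natCast (δ ^ _), ← Real.rpow_mul hδ.le,
    ← Real.rpow_natCast (T ^ _), ← Real.rpow_mul hT]
  field_simp
  rw [Real.rpow_neg_one, Real.rpow_one]
  field_simp

section Empirical

variable {Ω α : Type*} [MeasurableSpace Ω] {μ : Measure Ω} [DecidableEq α] [MeasurableSpace α]
  [MeasurableSingletonClass α] {n m : ℕ} {X : Fin n → Ω → α}

lemma measurable_ofReal_abs_sub_emp_pow (hX : ∀ i, Measurable (X i)) (q : ℝ) (u : α) :
    Measurable fun ω => ENNReal.ofReal (|q - emp X ω u| ^ m) := by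
  have : Measurable fun ω => emp X ω u :=
    (measurable_from_nat.comp (measurable_card_filter hX)).div_const _
  fun_prop

variable [IsProbabilityMeasure μ]

lemma lintegral_ofReal_abs_sub_emp_pow (hind : iIndepFun X μ) (hX : ∀ i, Measurable (X i))
    (hn : n ≠ 0) (hm : Even m) {u : α} {θ : I} (hθ : ∀ i, μ.real (X i ⁻¹' {u}) = θ) :
    ∫⁻ ω, ENNReal.ofReal (|θ - emp X ω u| ^ m) ∂μ =
      ENNReal.ofReal (binomialCentralMoment n m θ / n ^ m) := by
  have hscale : ∀ ω, |θ - emp X ω u| ^ m =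
      ((#(univ.filter (fun i => X i ω = u)) : ℝ) - n * θ) ^ m * ((n : ℝ) ^ m)⁻¹ := fun ω => by
    rw [emp, hm.pow_abs, ← hm.neg_pow, ← inv_pow, ← mul_pow]
    congr 1
    field_simp
    ring
  have hlaw := hind.hasLaw_card_filter hX hθ
  rw [Fintype.card_fin] at hlaw
  simp_rw [hscale, ENNReal.ofReal_mul (hm.pow_nonneg _)]
  rw [lintegral_mul_const' _ _ ENNReal.ofReal_ne_top,
    lintegral_ofReal_sub_pow_of_hasLaw_binomial hlaw hm, ← ENNReal.ofReal_mul
    (binomialCentralMoment_nonneg hm θ), div_eq_mul_inv]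

lemma lintegral_tsum_ofReal_abs_sub_emp_pow [Countable α] (hind : iIndepFun X μ)
    (hX : ∀ i, Measurable (X i)) (hn : n ≠ 0) (hm : Even m) {p : α → ℝ} (h0 : ∀ u, 0 ≤ p u)
    (h1 : ∀ u, p u ≤ 1) (hp : ∀ i u, μ.real (X i ⁻¹' {u}) = p u) {T : ℝ}
    (hT : HasSum (fun u => binomialCentralMoment n m (p u)) T) :
    ∫⁻ ω, ∑' u, ENNReal.ofReal (|p u - emp X ω u| ^ m) ∂μ = ENNReal.ofReal (T / n ^ m) := by
  have hnonneg : ∀ u, 0 ≤ binomialCentralMoment n m (p u) / n ^ m := fun u =>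
    div_nonneg (binomialCentralMoment_nonneg hm ⟨p u, h0 u, h1 u⟩) (by positivity)
  rw [lintegral_tsum fun u => (measurable_ofReal_abs_sub_emp_pow hX (p u) u).aemeasurable,
    ← (hT.div_const _).tsum_eq, ENNReal.ofReal_tsum_of_nonneg hnonneg (hT.div_const _).summable]
  exact tsum_congr fun u =>
    lintegral_ofReal_abs_sub_emp_pow hind hX hn hm (θ := ⟨p u, h0 u, h1 u⟩) fun i => hp i u

end Empirical

theorem subset_selection_data_independent_bound_general
    {𝒳 : Type*} [Countable 𝒳] [DecidableEq 𝒳]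
    [MeasurableSpace 𝒳] [MeasurableSingletonClass 𝒳]
    {Ω : Type*} [MeasureSpace Ω] [IsProbabilityMeasure (ℙ : Measure Ω)]
    (p : 𝒳 → ℝ) (hp0 : ∀ u, 0 ≤ p u) (hp1 : ∑' u, p u = 1)
    (n : ℕ) (hn : 1 ≤ n)
    (X : Fin n → Ω → 𝒳) (hmeas : ∀ i, Measurable (X i))
    (hindep : iIndepFun X ℙ)
    (hdist : ∀ i u, (ℙ {ω | X i ω = u}).toReal = p u)
    (m : ℕ) (hm : Even m) (hm0 : 0 < m) (d : ℕ)
    (c : ℕ → ℝ) (hc : MomentIdentity n m d c)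
    (δ : ℝ) (hδ : δ ∈ Set.Ioo (0:ℝ) 1) :
    ℙ {ω | ⨆ u, |p u - emp X ω u| ≤
        (1/(n:ℝ)) * δ ^ (-(1:ℝ)/(m:ℝ)) *
          (∑ k ∈ Finset.Icc 1 d, c k * ∑' u, (p u)^k * (1 - p u)^k) ^ ((1:ℝ)/(m:ℝ))}
      ≥ ENNReal.ofReal (1 - δ) := by
  have hsum : Summable p := by
    by_contra h
    simp [tsum_eq_zero_of_not_summable h] at hp1
  have hp_le_one : ∀ u, p u ≤ 1 := fun u => hp1 ▸ hsum.le_tsum u fun j _ => hp0 j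
  set T := ∑ k ∈ Icc 1 d, c k * ∑' u, p u ^ k * (1 - p u) ^ k
  set B := (1 / (n : ℝ)) * δ ^ (-(1:ℝ) / m) * T ^ ((1:ℝ) / m)
  have hT := hc.hasSum_binomialCentralMoment hsum hp0 hp_le_one
  have hT0 : 0 ≤ T := hT.nonneg fun u => binomialCentralMoment_nonneg hm ⟨p u, hp0 u, hp_le_one u⟩
  have hB : 0 ≤ B :=
    mul_nonneg (mul_nonneg (by positivity) (Real.rpow_nonneg hδ.1.le _)) (Real.rpow_nonneg hT0 _)
  have hlint : ∫⁻ ω, ∑' u, ENNReal.ofReal (|p u - emp X ω u| ^ m) ∂ℙ =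
      ENNReal.ofReal (B ^ m) * ENNReal.ofReal δ := by
    rw [lintegral_tsum_ofReal_abs_sub_emp_pow hindep hmeas (by omega) hm hp0 hp_le_one hdist hT,
      ← ENNReal.ofReal_mul (by positivity), mul_rpow_one_div_pow_mul _ hδ.1 hT0 hm0.ne',
      one_div, inv_pow, inv_mul_eq_div]
  have htail := measure_lt_le_of_lintegral_le_mul
    (Measurable.tsum fun u => measurable_ofReal_abs_sub_emp_pow hmeas (p u) u).aemeasurable
    ENNReal.ofReal_ne_top hlint.le
  rw [ge_iff_le, ENNReal.ofReal_sub _ hδ.1.le, ENNReal.ofReal_one]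
  refine one_sub_le_prob_of_prob_compl_le (le_trans (measure_mono fun ω hω => ?_) htail)
  exact ofReal_pow_lt_tsum_of_lt_iSup hB hm0.ne' (not_le.1 hω)

/-- **Theorem 2 (data-independent bound).** With probability at least `1 - δ`,
`‖p - p̂‖_∞ ≤ (1/n) δ^{-1/m} (∑_{k=1}^{m/2} c_{k,m,n} ∑_u p_u^k (1-p_u)^k)^{1/m}`. -/
theorem subset_selection_data_independent_bound
    {𝒳 : Type*} [Countable 𝒳] [DecidableEq 𝒳]
    [MeasurableSpace 𝒳] [MeasurableSingletonClass 𝒳]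
    {Ω : Type*} [MeasureSpace Ω] [IsProbabilityMeasure (ℙ : Measure Ω)]
    (p : 𝒳 → ℝ) (hp0 : ∀ u, 0 ≤ p u) (hp1 : ∑' u, p u = 1)
    (n : ℕ) (hn : 1 ≤ n)
    (X : Fin n → Ω → 𝒳) (hmeas : ∀ i, Measurable (X i))
    (hindep : iIndepFun X ℙ)
    (hdist : ∀ i u, (ℙ {ω | X i ω = u}).toReal = p u)
    (m : ℕ) (hm : Even m) (hm0 : 0 < m) (d : ℕ) (hd : d = m / 2)
    (c : ℕ → ℝ) (hc : MomentIdentity n m d c)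
    (δ : ℝ) (hδ : δ ∈ Set.Ioo (0:ℝ) 1) :
    ℙ {ω | ⨆ u, |p u - emp X ω u| ≤
        (1/(n:ℝ)) * δ ^ (-(1:ℝ)/(m:ℝ)) *
          (∑ k ∈ Finset.Icc 1 d, c k * ∑' u, (p u)^k * (1 - p u)^k) ^ ((1:ℝ)/(m:ℝ))}
      ≥ ENNReal.ofReal (1 - δ) :=
  subset_selection_data_independent_bound_general p hp0 hp1 n hn X hmeas hindep hdist m hm hm0 d c
    hc δ hδ
end

section
/- Let X be a countable alphabet, p a probability distribution on X, and X_1,...,X_n i.i.d. samples from p with empirical estimator p̂_u = #{i ≤ n : X_i = u}/n. Let m be a positive even integer, d = m/2, and let c_{k,m,n} (1 ≤ k ≤ d) be real coefficients satisfying the binomial central-moment identity. Then E[ (sup_{u∈X} |p_u − p̂_u|)^m ] ≤ n^{−m} Σ_{u∈X} Σ_{k=1}^{d} c_{k,m,n} (p_u(1−p_u))^k. -/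
open MeasureTheory ProbabilityTheory Finset

/-!
For each letter `u` the count `N_u = n p̂_u` is binomial with parameters `n` and `p_u`, by
independence, so `E |p_u - p̂_u|^m = n^{-m} E (N_u - n p_u)^m` is the `u`-th summand by the
moment identity. Pointwise, `(sup_u |p_u - p̂_u|)^m ≤ ∑_u |p_u - p̂_u|^m`, and monotone
convergence exchanges the expectation with this countable sum. The resulting series converges
because the polynomial `∑_k c_k t^k` has no constant term, so its value at `t = p_u (1 - p_u)`
is `O(p_u)`.
-/

open scoped ENNReal unitInterval

section Binomial

variable {ι Ω α : Type*} [Fintype ι] {X : ι → Ω → α} {s : Set α} [DecidablePred (· ∈ s)]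

lemma setOf_filter_mem_eq_iInter [DecidableEq ι] (S : Finset ι) :
    {ω | ({i | X i ω ∈ s} : Finset ι) = S} = ⋂ i, X i ⁻¹' (if i ∈ S then s else sᶜ) := by
  ext ω
  simp only [Set.mem_ofPred_eq, Set.mem_iInter, Set.mem_preimage, Finset.ext_iff,
    Finset.mem_filter, Finset.mem_univ, true_and]
  refine forall_congr' fun i => ?_
  by_cases hi : i ∈ S <;> simp [hi]

variable [MeasurableSpace Ω] [MeasurableSpace α] {P : Measure Ω}

lemma measurable_card_filter_mem (hX : ∀ i, Measurable (X i)) (hs : MeasurableSet s) :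
    Measurable fun ω => #{i | X i ω ∈ s} := by
  simp_rw [Finset.card_filter]
  exact Finset.measurable_sum _ fun i _ =>
    Measurable.ite (hX i hs) measurable_const measurable_const

lemma measure_filter_mem_eq_pow [IsProbabilityMeasure P] (hindep : iIndepFun X P)
    (hX : ∀ i, Measurable (X i)) (hs : MeasurableSet s) {θ : ℝ≥0∞}
    (hθ : ∀ i, P (X i ⁻¹' s) = θ) (S : Finset ι) :
    P {ω | ({i | X i ω ∈ s} : Finset ι) = S} = θ ^ #S * (1 - θ) ^ (Fintype.card ι - #S) := by
  classical
  have hmeas : ∀ i, MeasurableSet[MeasurableSpace.comap (X i) inferInstance]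
      (X i ⁻¹' (if i ∈ S then s else sᶜ)) := fun i =>
    ⟨_, by split_ifs; exacts [hs, hs.compl], rfl⟩
  have hfactor : ∀ i, P (X i ⁻¹' (if i ∈ S then s else sᶜ)) = if i ∈ S then θ else 1 - θ := by
    intro i
    split_ifs
    · exact hθ i
    · rw [Set.preimage_compl, prob_compl_eq_one_sub (hX i hs), hθ]
  rw [setOf_filter_mem_eq_iInter, hindep.meas_iInter hmeas]
  simp_rw [hfactor]
  rw [prod_ite, prod_const, prod_const, filter_univ_mem, filter_not, filter_univ_mem,
    card_univ_sdiff]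

lemma measure_card_filter_mem_eq [IsProbabilityMeasure P] (hindep : iIndepFun X P)
    (hX : ∀ i, Measurable (X i)) (hs : MeasurableSet s) {θ : ℝ≥0∞}
    (hθ : ∀ i, P (X i ⁻¹' s) = θ) (y : ℕ) :
    P {ω | #{i | X i ω ∈ s} = y} =
      (Fintype.card ι).choose y * θ ^ y * (1 - θ) ^ (Fintype.card ι - y) := by
  have hdecomp : {ω | #{i | X i ω ∈ s} = y} =
      ⋃ S ∈ powersetCard y univ, {ω | ({i | X i ω ∈ s} : Finset ι) = S} := by
    ext ω
    simp
  have hmeas : ∀ S : Finset ι, MeasurableSet {ω | ({i | X i ω ∈ s} : Finset ι) = S} := by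
    classical
    intro S
    rw [setOf_filter_mem_eq_iInter]
    exact .iInter fun i => hX i (by split_ifs; exacts [hs, hs.compl])
  rw [hdecomp, measure_biUnion_finset _ fun S _ => hmeas S]
  · rw [sum_congr rfl fun S hS => by
        rw [measure_filter_mem_eq_pow hindep hX hs hθ, mem_powersetCard_univ.1 hS],
      sum_const, card_powersetCard, card_univ, nsmul_eq_mul, mul_assoc]
  · intro S _ T _ hST
    exact Set.disjoint_left.2 fun ω hS hT => hST (hS.symm.trans hT)


lemma hasLaw_card_filter_mem_binomial [IsProbabilityMeasure P] (hindep : iIndepFun X P)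
    (hX : ∀ i, Measurable (X i)) (hs : MeasurableSet s) (θ : I)
    (hθ : ∀ i, P.real (X i ⁻¹' s) = θ) :
    HasLaw (fun ω => #{i | X i ω ∈ s}) (binomial (Fintype.card ι) θ) P where
  aemeasurable := (measurable_card_filter_mem hX hs).aemeasurable
  map_eq := by
    have hθ' : ∀ i, P (X i ⁻¹' s) = ENNReal.ofReal θ := fun i => by
      rw [← hθ i, measureReal_def, ENNReal.ofReal_toReal (measure_ne_top _ _)]
    refine Measure.ext_of_singleton fun y => ?_
    rw [Measure.map_apply (measurable_card_filter_mem hX hs) (measurableSet_singleton y),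
      binomial_singleton,
      show (fun ω => #{i | X i ω ∈ s}) ⁻¹' {y} = {ω | #{i | X i ω ∈ s} = y} from rfl,
      measure_card_filter_mem_eq hindep hX hs hθ',
      ENNReal.ofReal_mul (mul_nonneg (Nat.cast_nonneg _) (pow_nonneg θ.2.1 _)),
      ENNReal.ofReal_mul (Nat.cast_nonneg _), ENNReal.ofReal_pow θ.2.1,
      ENNReal.ofReal_pow (unitInterval.one_minus_nonneg θ), ENNReal.ofReal_natCast,
      ENNReal.ofReal_sub _ θ.2.1, ENNReal.ofReal_one]

end Binomial

lemma ProbabilityTheory.HasLaw.integrable_comp {Ω β E : Type*} [MeasurableSpace Ω]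
    [MeasurableSpace β] [NormedAddCommGroup E] {P : Measure Ω} {μ : Measure β} {N : Ω → β}
    (hN : HasLaw N μ P) {φ : β → E} (hφ : Integrable φ μ) : Integrable (fun ω => φ (N ω)) P :=
  (hN.map_eq ▸ hφ).comp_aemeasurable hN.aemeasurable

lemma abs_sum_Icc_mul_pow_le (c : ℕ → ℝ) (d : ℕ) {t : ℝ} (ht0 : 0 ≤ t) (ht1 : t ≤ 1) :
    |∑ k ∈ Icc 1 d, c k * t ^ k| ≤ (∑ k ∈ Icc 1 d, |c k|) * t := by
  rw [sum_mul]
  refine (abs_sum_le_sum_abs _ _).trans (sum_le_sum fun k hk => ?_)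
  rw [abs_mul, abs_of_nonneg (pow_nonneg ht0 k)]
  exact mul_le_mul_of_nonneg_left (pow_le_of_le_one ht0 ht1 (by grind)) (abs_nonneg _)

lemma ofReal_iSup_pow_le_tsum {ι : Type*} {f : ι → ℝ} (hf : ∀ i, 0 ≤ f i) {m : ℕ}
    (hm : m ≠ 0) :
    ENNReal.ofReal ((⨆ i, f i) ^ m) ≤ ∑' i, ENNReal.ofReal (f i ^ m) := by
  rw [Real.iSup_pow_of_ne_zero hf hm]
  by_cases hbdd : BddAbove (Set.range fun i => f i ^ m)
  · cases isEmpty_or_nonempty ι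
    · simp
    · rw [Monotone.map_ciSup_of_continuousAt ENNReal.continuous_ofReal.continuousAt
        ENNReal.ofReal_mono hbdd]
      exact iSup_le fun i => ENNReal.le_tsum i
  · simp [Real.iSup_of_not_bddAbove hbdd]

lemma integral_le_tsum_integral {Ω ι : Type*} [MeasurableSpace Ω] [Countable ι]
    {μ : Measure Ω} {F : Ω → ℝ} {f : ι → Ω → ℝ} (hF0 : 0 ≤ᵐ[μ] F)
    (hf : ∀ i, Integrable (f i) μ) (hf0 : ∀ i, 0 ≤ᵐ[μ] f i)
    (hsum : Summable fun i => ∫ ω, f i ω ∂μ)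
    (hF : ∀ᵐ ω ∂μ, ENNReal.ofReal (F ω) ≤ ∑' i, ENNReal.ofReal (f i ω)) :
    ∫ ω, F ω ∂μ ≤ ∑' i, ∫ ω, f i ω ∂μ := by
  have hnonneg : 0 ≤ ∑' i, ∫ ω, f i ω ∂μ := tsum_nonneg fun i => integral_nonneg_of_ae (hf0 i)
  by_cases hFint : Integrable F μ
  swap
  · rwa [integral_undef hFint]
  have hlint : ∫⁻ ω, ENNReal.ofReal (F ω) ∂μ ≤ ENNReal.ofReal (∑' i, ∫ ω, f i ω ∂μ) :=
    calc ∫⁻ ω, ENNReal.ofReal (F ω) ∂μ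
        ≤ ∫⁻ ω, ∑' i, ENNReal.ofReal (f i ω) ∂μ := lintegral_mono_ae hF
      _ = ∑' i, ∫⁻ ω, ENNReal.ofReal (f i ω) ∂μ :=
          lintegral_tsum fun i => (hf i).aemeasurable.ennreal_ofReal
      _ = ∑' i, ENNReal.ofReal (∫ ω, f i ω ∂μ) :=
          tsum_congr fun i => (ofReal_integral_eq_lintegral_ofReal (hf i) (hf0 i)).symm
      _ = ENNReal.ofReal (∑' i, ∫ ω, f i ω ∂μ) :=
          (ENNReal.ofReal_tsum_of_nonneg (fun i => integral_nonneg_of_ae (hf0 i)) hsum).symm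
  rw [integral_eq_lintegral_of_nonneg_ae hF0 hFint.aestronglyMeasurable,
    ← ENNReal.toReal_ofReal hnonneg]
  exact ENNReal.toReal_mono ENNReal.ofReal_ne_top hlint

section Empirical

variable {𝒳 Ω : Type*} [DecidableEq 𝒳] [MeasurableSpace 𝒳] [MeasurableSingletonClass 𝒳]
  [MeasurableSpace Ω] {P : Measure Ω} [IsProbabilityMeasure P] {n : ℕ} {X : Fin n → Ω → 𝒳}

lemma hasLaw_card_filter_eq_binomial (hindep : iIndepFun X P) (hX : ∀ i, Measurable (X i))
    {u : 𝒳} (θ : I) (hθ : ∀ i, P.real {ω | X i ω = u} = θ) :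
    HasLaw (fun ω => #{i | X i ω = u}) (binomial n θ) P := by
  simpa using hasLaw_card_filter_mem_binomial hindep hX (measurableSet_singleton u) θ hθ

lemma integral_abs_sub_emp_pow (hindep : iIndepFun X P) (hX : ∀ i, Measurable (X i))
    (hn : n ≠ 0) {m d : ℕ} (hm : Even m) {c : ℕ → ℝ} (hc : MomentIdentity n m d c) {u : 𝒳}
    (θ : I) (hθ : ∀ i, P.real {ω | X i ω = u} = θ) :
    ∫ ω, |θ - emp X ω u| ^ m ∂P = 1 / (n : ℝ) ^ m * ∑ k ∈ Icc 1 d, c k * (θ * (1 - θ)) ^ k := by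
  have hn' : (n : ℝ) ≠ 0 := Nat.cast_ne_zero.2 hn
  have hpt (ω : Ω) :
      |θ - emp X ω u| ^ m = 1 / (n : ℝ) ^ m * ((#{i | X i ω = u} : ℝ) - n * θ) ^ m := by
    have hneg : (θ : ℝ) - #{i | X i ω = u} / n = -(((#{i | X i ω = u} : ℝ) - n * θ) / n) := by
      field_simp
      ring
    rw [emp, hneg, abs_neg, hm.pow_abs, div_pow, one_div_mul_eq_div]
  have hlaw := hasLaw_card_filter_eq_binomial hindep hX θ hθ
  calc ∫ ω, |θ - emp X ω u| ^ m ∂P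
      = 1 / (n : ℝ) ^ m * ∫ ω, ((#{i | X i ω = u} : ℝ) - n * θ) ^ m ∂P := by
        simp_rw [hpt]
        exact integral_const_mul _ _
    _ = 1 / (n : ℝ) ^ m * ∑ y ∈ range (n + 1),
          (n.choose y : ℝ) * θ ^ y * (1 - θ) ^ (n - y) * ((y : ℝ) - n * θ) ^ m := by
        congr 1
        refine (hlaw.integral_comp (f := fun y : ℕ => ((y : ℝ) - n * θ) ^ m)
          .of_discrete).trans ?_
        rw [integral_binomial, Nat.range_succ_eq_Iic]
        rfl
    _ = _ := by rw [hc θ θ.2]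

end Empirical

theorem supNorm_central_moment_bound_general
    {𝒳 : Type*} [Countable 𝒳] [DecidableEq 𝒳]
    [MeasurableSpace 𝒳] [MeasurableSingletonClass 𝒳]
    {Ω : Type*} [MeasureSpace Ω] [IsProbabilityMeasure (ℙ : Measure Ω)]
    (p : 𝒳 → ℝ) (hp0 : ∀ u, 0 ≤ p u) (hp1 : ∑' u, p u = 1)
    (n : ℕ) (hn : 1 ≤ n)
    (X : Fin n → Ω → 𝒳) (hmeas : ∀ i, Measurable (X i))
    (hindep : iIndepFun X ℙ)
    (hdist : ∀ i u, (ℙ {ω | X i ω = u}).toReal = p u)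
    (m : ℕ) (hm : Even m) (hm0 : 0 < m) (d : ℕ)
    (c : ℕ → ℝ) (hc : MomentIdentity n m d c) :
    ∫ ω, (⨆ u, |p u - emp X ω u|) ^ m ∂ℙ ≤
      (1/(n:ℝ)^m) * ∑' u, ∑ k ∈ Finset.Icc 1 d, c k * (p u * (1 - p u))^k := by
  have hp : Summable p := by
    by_contra h
    simp [tsum_eq_zero_of_not_summable h] at hp1
  have hp_le_one : ∀ u, p u ≤ 1 := fun u => hp1 ▸ hp.le_tsum u fun v _ => hp0 v
  let θ : 𝒳 → I := fun u => ⟨p u, hp0 u, hp_le_one u⟩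
  set S : 𝒳 → ℝ := fun u => ∑ k ∈ Icc 1 d, c k * (p u * (1 - p u)) ^ k
  have hmoment : ∀ u, ∫ ω, |p u - emp X ω u| ^ m = 1 / (n : ℝ) ^ m * S u := fun u =>
    integral_abs_sub_emp_pow hindep hmeas (by omega) hm hc (θ u) fun i => hdist i u
  have hvar_le : ∀ u, p u * (1 - p u) ≤ p u := fun u =>
    mul_le_of_le_one_right (hp0 u) (by linarith [hp0 u])
  have hS : Summable S := .of_norm_bounded (hp.mul_left (∑ k ∈ Icc 1 d, |c k|)) fun u =>
    (abs_sum_Icc_mul_pow_le c d (mul_nonneg (hp0 u) (by linarith [hp_le_one u]))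
      ((hvar_le u).trans (hp_le_one u))).trans
      (mul_le_mul_of_nonneg_left (hvar_le u) (sum_nonneg fun k _ => abs_nonneg (c k)))
  rw [← tsum_mul_left, ← tsum_congr hmoment]
  refine integral_le_tsum_integral
    (ae_of_all _ fun ω => pow_nonneg (Real.iSup_nonneg fun u => abs_nonneg _) m)
    (fun u => ?_) (fun u => ae_of_all _ fun ω => by positivity)
    (by simpa only [hmoment] using hS.mul_left _)
    (ae_of_all _ fun ω => ofReal_iSup_pow_le_tsum (fun u => abs_nonneg _) hm0.ne')
  exact (hasLaw_card_filter_eq_binomial hindep hmeas (θ u) fun i => hdist i u).integrable_comp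
    (integrable_binomial fun y : ℕ => |p u - y / n| ^ m)

/-- **Moment bound for the sup-norm deviation.**
`E[ (sup_u |p_u - p̂_u|)^m ] ≤ n^{-m} ∑_u ∑_{k=1}^{m/2} c_{k,m,n} (p_u(1-p_u))^k`. -/
theorem supNorm_central_moment_bound
    {𝒳 : Type*} [Countable 𝒳] [DecidableEq 𝒳]
    [MeasurableSpace 𝒳] [MeasurableSingletonClass 𝒳]
    {Ω : Type*} [MeasureSpace Ω] [IsProbabilityMeasure (ℙ : Measure Ω)]
    (p : 𝒳 → ℝ) (hp0 : ∀ u, 0 ≤ p u) (hp1 : ∑' u, p u = 1)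
    (n : ℕ) (hn : 1 ≤ n)
    (X : Fin n → Ω → 𝒳) (hmeas : ∀ i, Measurable (X i))
    (hindep : iIndepFun X ℙ)
    (hdist : ∀ i u, (ℙ {ω | X i ω = u}).toReal = p u)
    (m : ℕ) (hm : Even m) (hm0 : 0 < m) (d : ℕ) (hd : d = m / 2)
    (c : ℕ → ℝ) (hc : MomentIdentity n m d c) :
    ∫ ω, (⨆ u, |p u - emp X ω u|) ^ m ∂ℙ ≤
      (1/(n:ℝ)^m) * ∑' u, ∑ k ∈ Finset.Icc 1 d, c k * (p u * (1 - p u))^k :=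
  supNorm_central_moment_bound_general p hp0 hp1 n hn X hmeas hindep hdist m hm hm0 d c hc
end

section
/- Let X be a countable alphabet, p a probability distribution on X, and X_1,...,X_n (n ≥ 2) i.i.d. samples from p with empirical estimator p̂_u = #{i ≤ n : X_i = u}/n. Let m be a positive even integer, d = m/2, and let c_{k,m,n} (1 ≤ k ≤ d) be nonnegative real coefficients satisfying the binomial central-moment identity. For δ_2 ∈ (0,1), define ε_n = √( (2/n)·log(1/δ_2) ) · ( sup_{q∈[0,1]} Σ_{k=1}^{d} c_{k,m,n} k (q(1−q))^{k−1}(1−2q) + Σ_{k=1}^{d} c_{k,m,n} k(k−1)/(n·2^{2k−3}) ). Then with probability at least 1 − δ_2, Σ_{u∈X} Σ_{k=1}^{d} c_{k,m,n} (p_u(1−p_u))^k ≤ (n/(n−1))^{d} · ( Σ_{u∈X} Σ_{k=1}^{d} c_{k,m,n} (p̂_u(1−p̂_u))^k + ε_n ). -/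
open MeasureTheory ProbabilityTheory Finset

/-- The McDiarmid correction term `ε_n` of Theorem 3 / Proposition 1. -/
noncomputable def epsN (n d : ℕ) (c : ℕ → ℝ) (δ₂ : ℝ) : ℝ :=
  Real.sqrt ((2/(n:ℝ)) * Real.log (1/δ₂)) *
    ((⨆ q ∈ Set.Icc (0:ℝ) 1,
        ∑ k ∈ Finset.Icc 1 d, c k * k * (q*(1-q))^(k-1) * (1-2*q)) +
      ∑ k ∈ Finset.Icc 1 d, c k * k * ((k:ℝ)-1) / ((n:ℝ) * (2:ℝ)^(2*(k:ℤ)-3)))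

/-- The data-dependent confidence bound `R_{δ₁,δ₂,m}(Xⁿ)` of Theorem 3, expressed as a
function of the empirical sum `S = ∑_u ∑_{k=1}^d c_k (p̂_u(1-p̂_u))^k`. -/
noncomputable def Rb (n d m : ℕ) (c : ℕ → ℝ) (δ₁ δ₂ : ℝ) (S : ℝ) : ℝ :=
  (1/(n:ℝ)) * Real.sqrt ((n:ℝ)/((n:ℝ)-1)) *
    ((1/δ₁) * (S + epsN n d c δ₂)) ^ ((1:ℝ)/(m:ℝ))

/-- The empirical sum `∑_u ∑_{k=1}^d c_k (p̂_u(1-p̂_u))^k` appearing in `R_{δ₁,δ₂,m}`. -/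
noncomputable def empSum {𝒳 : Type*} [DecidableEq 𝒳] {Ω : Type*} {n : ℕ}
    (d : ℕ) (c : ℕ → ℝ) (X : Fin n → Ω → 𝒳) (ω : Ω) : ℝ :=
  ∑' u, ∑ k ∈ Finset.Icc 1 d, c k * (emp X ω u * (1 - emp X ω u))^k


open Real
open scoped NNReal

/-!
Write `f q = ∑_{k=1}^d c_k (q(1-q))^k`, so that the empirical sum is `F = ∑_u f(p̂_u)`.
Changing one sample moves at most two of the `p̂_u`, each by `1/n`, so `F` has bounded
differences `2 sup_{[0,1]} |f'| / n`; since `f'(1-q) = -f'(q)`, this supremum is the one in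
`ε_n`. McDiarmid's inequality (Hoeffding's lemma applied one coordinate at a time) then gives
`F ≥ E F - ε_n` with probability at least `1 - δ₂`. On the other side,
`n/(n-1) · p̂_u(1-p̂_u)` is an unbiased estimator of `p_u(1-p_u)`, so Jensen's inequality gives
`(p_u(1-p_u))^k ≤ (n/(n-1))^k E[(p̂_u(1-p̂_u))^k]`, and as `c_k ≥ 0`,
`∑_u f(p_u) ≤ (n/(n-1))^d E F`.
-/

lemma integrable_of_forall_abs_sub_le {β : Type*} [MeasurableSpace β] [Countable β]
    [MeasurableSingletonClass β] {μ : Measure β} [IsFiniteMeasure μ] {f : β → ℝ} (b₀ : β)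
    {C : ℝ} (h : ∀ b, |f b - f b₀| ≤ C) : Integrable f μ :=
  .of_bound (measurable_of_countable f).aestronglyMeasurable (|f b₀| + C) <|
    ae_of_all _ fun b => by
      rw [Real.norm_eq_abs]
      linarith [abs_sub_abs_le_abs_sub (f b) (f b₀), h b]

lemma integral_pi_fin_succ {α : Type*} [MeasurableSpace α] {ν : Measure α} [SigmaFinite ν]
    {N : ℕ} {f : (Fin (N + 1) → α) → ℝ} (hf : Integrable f (Measure.pi fun _ => ν)) :
    ∫ x, f x ∂(Measure.pi fun _ => ν)
      = ∫ r, ∫ a, f (Fin.cons a r) ∂ν ∂(Measure.pi fun _ => ν) := by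
  have e := (measurePreserving_piFinSuccAbove (fun _ : Fin (N + 1) => ν) 0).symm
  have hf' : Integrable (fun q => f ((MeasurableEquiv.piFinSuccAbove (fun _ => α) 0).symm q))
      (ν.prod (Measure.pi fun _ => ν)) :=
    (e.integrable_comp_emb (MeasurableEquiv.measurableEmbedding _)).2 hf
  rw [← e.integral_comp', integral_prod_symm _ hf']
  simp [MeasurableEquiv.piFinSuccAbove_symm_apply, Fin.consEquiv]

lemma hasSubgaussianMGF_of_forall_abs_sub_le {Ω : Type*} [MeasurableSpace Ω] {μ : Measure Ω}
    [IsProbabilityMeasure μ] {f : Ω → ℝ} (hf : AEMeasurable f μ) {B : ℝ}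
    (hB : ∀ ω ω', |f ω - f ω'| ≤ B) :
    HasSubgaussianMGF (fun ω => f ω - ∫ ω', f ω' ∂μ) ((‖B‖₊ / 2) ^ 2) μ := by
  have := nonempty_of_isProbabilityMeasure μ
  have hbdd : BddBelow (Set.range f) := ⟨f (Classical.arbitrary Ω) - B, by
    rintro _ ⟨ω, rfl⟩
    linarith [(abs_sub_le_iff.1 (hB (Classical.arbitrary Ω) ω)).1]⟩
  have hmem : ∀ ω, f ω ∈ Set.Icc (⨅ ω', f ω') ((⨅ ω', f ω') + B) := fun ω =>
    ⟨ciInf_le hbdd ω, by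
      have : f ω - B ≤ ⨅ ω', f ω' :=
        le_ciInf fun ω' => by linarith [(abs_sub_le_iff.1 (hB ω ω')).1]
      linarith⟩
  simpa using hasSubgaussianMGF_of_mem_Icc hf (ae_of_all _ hmem)

def HasBoundedDifferences {ι α : Type*} (F : (ι → α) → ℝ) (B : ℝ) : Prop :=
  ∀ x y : ι → α, ∀ i, (∀ j, j ≠ i → x j = y j) → |F x - F y| ≤ B

namespace HasBoundedDifferences

variable {α : Type*} {B : ℝ} {N : ℕ}

lemma comp_cons {F : (Fin (N + 1) → α) → ℝ} (hF : HasBoundedDifferences F B) (a : α) :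
    HasBoundedDifferences (fun r => F (Fin.cons a r)) B := fun r r' j h =>
  hF _ _ j.succ fun k hk => by
    cases k using Fin.cases with
    | zero => rfl
    | succ k => simpa using h k fun hkj => hk (hkj ▸ rfl)

lemma abs_sub_cons_le {F : (Fin (N + 1) → α) → ℝ} (hF : HasBoundedDifferences F B)
    (a a' : α) (r : Fin N → α) : |F (Fin.cons a r) - F (Fin.cons a' r)| ≤ B :=
  hF _ _ 0 fun j hj => by
    cases j using Fin.cases with
    | zero => exact absurd rfl hj
    | succ j => simp

lemma abs_sub_le : ∀ {N : ℕ} {F : (Fin N → α) → ℝ}, HasBoundedDifferences F B →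
    ∀ x y, |F x - F y| ≤ N * B
  | 0, F, _, x, y => by simp [Subsingleton.elim x y]
  | N + 1, F, hF, x, y => by
    have h₁ := hF.abs_sub_cons_le (x 0) (y 0) (Fin.tail x)
    have h₂ := (hF.comp_cons (y 0)).abs_sub_le (Fin.tail x) (Fin.tail y)
    rw [Fin.cons_self_tail] at h₁
    simp only [Fin.cons_self_tail] at h₂
    calc |F x - F y|
        ≤ |F x - F (Fin.cons (y 0) (Fin.tail x))| + |F (Fin.cons (y 0) (Fin.tail x)) - F y| :=
          _root_.abs_sub_le _ _ _
      _ ≤ B + N * B := add_le_add h₁ h₂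
      _ = (N + 1 : ℕ) * B := by push_cast; ring

variable [MeasurableSpace α] [Countable α] [MeasurableSingletonClass α]
  {ν : Measure α} [IsProbabilityMeasure ν]

lemma integral_cons {F : (Fin (N + 1) → α) → ℝ} (hF : HasBoundedDifferences F B) :
    HasBoundedDifferences (fun r => ∫ a, F (Fin.cons a r) ∂ν) B := by
  obtain ⟨a₀⟩ := nonempty_of_isProbabilityMeasure ν
  intro r r' j h
  have hint : ∀ r, Integrable (fun a => F (Fin.cons a r)) ν := fun r =>
    integrable_of_forall_abs_sub_le a₀ fun a => hF.abs_sub_cons_le a a₀ r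
  rw [← integral_sub (hint r) (hint r'), ← Real.norm_eq_abs]
  simpa using norm_integral_le_of_norm_le_const (μ := ν)
    (ae_of_all _ fun a => (Real.norm_eq_abs _).trans_le ((hF.comp_cons a) r r' j h))

lemma integrable {F : (Fin N → α) → ℝ} (hF : HasBoundedDifferences F B) :
    Integrable F (Measure.pi fun _ => ν) :=
  have := nonempty_of_isProbabilityMeasure ν
  integrable_of_forall_abs_sub_le (Classical.arbitrary _) fun x => hF.abs_sub_le x _

lemma integrable_exp_mul {F : (Fin N → α) → ℝ} (hF : HasBoundedDifferences F B) (c t : ℝ) :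
    Integrable (fun x => exp (t * (F x - c))) (Measure.pi fun _ => ν) := by
  have := nonempty_of_isProbabilityMeasure ν
  set x₀ := Classical.arbitrary (Fin N → α)
  refine integrable_exp_mul_of_mem_Icc (a := F x₀ - N * B - c) (b := F x₀ + N * B - c)
    (measurable_of_countable _).aemeasurable (ae_of_all _ fun x => ?_)
  have := abs_sub_le_iff.1 (hF.abs_sub_le x x₀)
  constructor <;> linarith

theorem hasSubgaussianMGF {F : (Fin N → α) → ℝ} (hF : HasBoundedDifferences F B) :
    HasSubgaussianMGF (fun x => F x - ∫ y, F y ∂(Measure.pi fun _ => ν))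
      (N * (‖B‖₊ / 2) ^ 2) (Measure.pi fun _ => ν) := by
  induction N with
  | zero =>
    have hF0 : (fun x => F x - ∫ y, F y ∂(Measure.pi fun _ => ν)) = fun _ => 0 := by
      funext x
      simp [fun y => congrArg F (Subsingleton.elim y x)]
    simp [hF0]
  | succ N ih =>
    set P := Measure.pi fun _ : Fin (N + 1) => ν
    set Q := Measure.pi fun _ : Fin N => ν
    set G : (Fin N → α) → ℝ := fun r => ∫ a, F (Fin.cons a r) ∂ν
    have hG : HasBoundedDifferences G B := hF.integral_cons
    have hEF : ∫ x, F x ∂P = ∫ r, G r ∂Q := integral_pi_fin_succ hF.integrable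
    refine ⟨fun t => hF.integrable_exp_mul _ t, fun t => ?_⟩
    have hinner (r : Fin N → α) : ∫ a, exp (t * (F (Fin.cons a r) - ∫ r, G r ∂Q)) ∂ν
        ≤ exp (t * (G r - ∫ r, G r ∂Q)) * exp ((‖B‖₊ / 2) ^ 2 * t ^ 2 / 2) := by
      have hHoeffding := (hasSubgaussianMGF_of_forall_abs_sub_le (μ := ν)
        (measurable_of_countable _).aemeasurable fun a a' => hF.abs_sub_cons_le a a' r).mgf_le t
      calc ∫ a, exp (t * (F (Fin.cons a r) - ∫ r, G r ∂Q)) ∂ν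
          = mgf (fun a => (G r - ∫ r, G r ∂Q) + (F (Fin.cons a r) - G r)) ν t := by
            simp only [mgf]; congr 1 with a; ring_nf
        _ = exp (t * (G r - ∫ r, G r ∂Q)) * mgf (fun a => F (Fin.cons a r) - G r) ν t :=
            mgf_const_add _
        _ ≤ _ := by gcongr; exact_mod_cast hHoeffding
    calc mgf (fun x => F x - ∫ y, F y ∂P) P t
        = ∫ r, ∫ a, exp (t * (F (Fin.cons a r) - ∫ r, G r ∂Q)) ∂ν ∂Q := by
          rw [mgf, hEF]
          exact integral_pi_fin_succ (hF.integrable_exp_mul _ t)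
      _ ≤ ∫ r, exp (t * (G r - ∫ r, G r ∂Q)) * exp ((‖B‖₊ / 2) ^ 2 * t ^ 2 / 2)
            ∂Q :=
          integral_mono_of_nonneg (ae_of_all _ fun r => integral_nonneg fun a => (exp_pos _).le)
            ((hG.integrable_exp_mul _ t).mul_const _) (ae_of_all _ hinner)
      _ = mgf (fun r => G r - ∫ r, G r ∂Q) Q t * exp ((‖B‖₊ / 2) ^ 2 * t ^ 2 / 2) :=
          integral_mul_const _ _
      _ ≤ exp (↑(N * (‖B‖₊ / 2) ^ 2 : ℝ≥0) * t ^ 2 / 2) *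
            exp ((‖B‖₊ / 2) ^ 2 * t ^ 2 / 2) := by
          gcongr
          exact (ih hG).mgf_le t
      _ = _ := by rw [← exp_add]; push_cast; ring_nf

theorem measureReal_le_integral_sub_le {F : (Fin N → α) → ℝ} (hF : HasBoundedDifferences F B)
    {ε : ℝ} (hε : 0 ≤ ε) :
    (Measure.pi fun _ => ν).real {x | ε ≤ ∫ y, F y ∂(Measure.pi fun _ => ν) - F x}
      ≤ exp (-2 * ε ^ 2 / (N * B ^ 2)) := by
  have h := (hF.hasSubgaussianMGF (ν := ν)).neg.measure_ge_le hε
  have hc : ((N * (‖B‖₊ / 2) ^ 2 : ℝ≥0) : ℝ) = N * B ^ 2 / 4 := by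
    push_cast
    rw [Real.norm_eq_abs, div_pow, sq_abs]
    ring
  rw [hc] at h
  convert h using 2
  · simp
  · ring

end HasBoundedDifferences

section VarPoly

variable (c : ℕ → ℝ) (d : ℕ)

noncomputable def varPoly (q : ℝ) : ℝ := ∑ k ∈ Icc 1 d, c k * (q * (1 - q)) ^ k

noncomputable def varPolyDeriv (q : ℝ) : ℝ :=
  ∑ k ∈ Icc 1 d, c k * k * (q * (1 - q)) ^ (k - 1) * (1 - 2 * q)

noncomputable def varPolyDerivSup : ℝ := ⨆ q ∈ Set.Icc (0 : ℝ) 1, varPolyDeriv c d q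

lemma hasDerivAt_varPoly (q : ℝ) : HasDerivAt (varPoly c d) (varPolyDeriv c d q) q := by
  have hbase : HasDerivAt (fun q : ℝ => q * (1 - q)) (1 - 2 * q) q :=
    ((hasDerivAt_id' q).fun_mul ((hasDerivAt_id' q).const_sub 1)).congr_deriv (by ring)
  exact HasDerivAt.fun_sum fun k _ => ((hbase.fun_pow k).const_mul (c k)).congr_deriv (by ring)

lemma varPoly_zero : varPoly c d 0 = 0 :=
  sum_eq_zero fun k hk => by simp [show k ≠ 0 by have := (mem_Icc.1 hk).1; omega]

lemma varPoly_nonneg (hc : ∀ k ∈ Icc 1 d, 0 ≤ c k) {q : ℝ}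
    (hq : q ∈ Set.Icc (0 : ℝ) 1) : 0 ≤ varPoly c d q :=
  sum_nonneg fun k hk =>
    mul_nonneg (hc k hk) (pow_nonneg (mul_nonneg hq.1 (by linarith [hq.2])) k)

lemma varPolyDeriv_one_sub (q : ℝ) : varPolyDeriv c d (1 - q) = -varPolyDeriv c d q := by
  rw [varPolyDeriv, varPolyDeriv, ← sum_neg_distrib]
  exact sum_congr rfl fun k _ => by ring_nf

lemma varPolyDeriv_le_varPolyDerivSup {q : ℝ} (hq : q ∈ Set.Icc (0 : ℝ) 1) :
    varPolyDeriv c d q ≤ varPolyDerivSup c d := by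
  have hcont : Continuous (varPolyDeriv c d) := by unfold varPolyDeriv; fun_prop
  refine le_ciSup₂ (f := fun q (_ : q ∈ Set.Icc (0 : ℝ) 1) => varPolyDeriv c d q) ?_ q hq
  refine ((isCompact_Icc (a := (0 : ℝ)) (b := 1)).bddAbove_image hcont.continuousOn).mono ?_
  simp only [Set.iUnion_subset_iff, Set.range_subset_iff]
  exact fun q hq => Set.mem_image_of_mem _ hq

lemma abs_varPolyDeriv_le {q : ℝ} (hq : q ∈ Set.Icc (0 : ℝ) 1) :
    |varPolyDeriv c d q| ≤ varPolyDerivSup c d := by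
  refine abs_le'.2 ⟨varPolyDeriv_le_varPolyDerivSup c d hq, ?_⟩
  rw [← varPolyDeriv_one_sub]
  exact varPolyDeriv_le_varPolyDerivSup c d ⟨by linarith [hq.2], by linarith [hq.1]⟩

lemma varPolyDerivSup_nonneg : 0 ≤ varPolyDerivSup c d :=
  (abs_nonneg _).trans (abs_varPolyDeriv_le c d ⟨zero_le_one, le_rfl⟩)

lemma abs_varPoly_sub_le {q q' : ℝ} (hq : q ∈ Set.Icc (0 : ℝ) 1)
    (hq' : q' ∈ Set.Icc (0 : ℝ) 1) :
    |varPoly c d q - varPoly c d q'| ≤ varPolyDerivSup c d * |q - q'| := by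
  simpa only [Real.norm_eq_abs] using
    (convex_Icc (0 : ℝ) 1).norm_image_sub_le_of_norm_hasDerivWithin_le
      (fun z _ => (hasDerivAt_varPoly c d z).hasDerivWithinAt)
      (fun z hz => (Real.norm_eq_abs _).trans_le (abs_varPolyDeriv_le c d hz)) hq' hq

end VarPoly

section Frequency

variable {α : Type*} [DecidableEq α] {n : ℕ}

noncomputable def freq (x : Fin n → α) (u : α) : ℝ :=
  (univ.filter (fun i => x i = u)).card / n

lemma freq_mem_Icc (x : Fin n → α) (u : α) : freq x u ∈ Set.Icc (0 : ℝ) 1 :=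
  ⟨by unfold freq; positivity, div_le_one_of_le₀ (by
    simpa using (Nat.cast_le (α := ℝ)).2 (card_filter_le (univ : Finset (Fin n)) (x · = u)))
    n.cast_nonneg⟩

lemma freq_eq_zero {x : Fin n → α} {u : α} (hu : ∀ i, x i ≠ u) : freq x u = 0 := by
  simp [freq, filter_eq_empty_iff.2 fun i _ => hu i]

lemma freq_eq_of_forall_ne {x y : Fin n → α} {i : Fin n} (hxy : ∀ j, j ≠ i → x j = y j)
    {u : α} (hx : x i ≠ u) (hy : y i ≠ u) : freq x u = freq y u := by
  unfold freq
  congr 3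
  ext j
  by_cases hj : j = i
  · subst hj; simp [hx, hy]
  · simp [hxy j hj]

lemma abs_freq_sub_freq_le {x y : Fin n → α} {i : Fin n} (hxy : ∀ j, j ≠ i → x j = y j)
    (u : α) : |freq x u - freq y u| ≤ 1 / n := by
  have hcount : ∀ z : Fin n → α, ((univ.filter (fun j => z j = u)).card : ℝ)
      = ∑ j, if z j = u then 1 else 0 := fun z => natCast_card_filter _ _
  rw [freq, freq, div_sub_div_same, abs_div, Nat.abs_cast, hcount, hcount, ← sum_sub_distrib,
    sum_eq_single i (fun j _ hj => by simp [hxy j hj]) (by simp)]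
  gcongr
  split_ifs <;> simp

variable (c : ℕ → ℝ) (d : ℕ)

lemma summable_varPoly_freq (x : Fin n → α) : Summable fun u => varPoly c d (freq x u) :=
  summable_of_ne_finset_zero (s := univ.image x) fun u hu => by
    rw [freq_eq_zero fun i hi => hu (mem_image.2 ⟨i, mem_univ i, hi⟩), varPoly_zero]

theorem hasBoundedDifferences_tsum_varPoly_freq :
    HasBoundedDifferences (fun x : Fin n → α => ∑' u, varPoly c d (freq x u))
      (2 * varPolyDerivSup c d / n) := by
  intro x y i hxy
  have hG := varPolyDerivSup_nonneg c d
  rw [← (summable_varPoly_freq c d x).tsum_sub (summable_varPoly_freq c d y),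
    tsum_eq_sum (s := {x i, y i}) fun u hu => by
      simp only [mem_insert, mem_singleton, not_or] at hu
      rw [freq_eq_of_forall_ne hxy (Ne.symm hu.1) (Ne.symm hu.2), sub_self]]
  calc |∑ u ∈ {x i, y i}, (varPoly c d (freq x u) - varPoly c d (freq y u))|
      ≤ ∑ u ∈ {x i, y i}, varPolyDerivSup c d * (1 / n) := by
        refine (abs_sum_le_sum_abs _ _).trans (sum_le_sum fun u _ => ?_)
        exact (abs_varPoly_sub_le c d (freq_mem_Icc x u) (freq_mem_Icc y u)).trans
          (by gcongr; exact abs_freq_sub_freq_le hxy u)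
    _ ≤ 2 * (varPolyDerivSup c d * (1 / n)) := by
        rw [sum_const, nsmul_eq_mul]
        gcongr
        exact_mod_cast card_le_two
    _ = 2 * varPolyDerivSup c d / n := by ring

end Frequency

section Bias

variable {α : Type*} [MeasurableSpace α] [MeasurableSingletonClass α]
  (ν : Measure α) [IsProbabilityMeasure ν] {n : ℕ}

lemma measureReal_pi_eq_and_ne {i j : Fin n} (hij : i ≠ j) (u : α) :
    (Measure.pi fun _ : Fin n => ν).real {x | x i = u ∧ x j ≠ u}
      = ν.real {u} * (1 - ν.real {u}) := by
  have hind : IndepFun (fun x : Fin n → α => x i) (fun x => x j) (Measure.pi fun _ => ν) :=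
    (iIndepFun_pi (X := fun _ => id) fun _ => aemeasurable_id).indepFun hij
  have hs := measurableSet_singleton u
  rw [measureReal_def, show {x : Fin n → α | x i = u ∧ x j ≠ u}
      = (fun x => x i) ⁻¹' {u} ∩ (fun x => x j) ⁻¹' {u}ᶜ from rfl,
    hind.measure_inter_preimage_eq_mul _ _ hs hs.compl, ENNReal.toReal_mul, ← measureReal_def,
    ← measureReal_def, (measurePreserving_eval _ i).measureReal_preimage hs.nullMeasurableSet,
    (measurePreserving_eval _ j).measureReal_preimage hs.compl.nullMeasurableSet,
    probReal_compl_eq_one_sub hs]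

variable [DecidableEq α] [Countable α]

lemma integral_card_mul_card (u : α) :
    ∫ x, ((univ.filter (fun i => x i = u)).card : ℝ) * (univ.filter (fun i => x i ≠ u)).card
        ∂(Measure.pi fun _ : Fin n => ν)
      = n * (n - 1) * (ν.real {u} * (1 - ν.real {u})) := by
  set θ := ν.real {u}
  have hpair : ∀ x : Fin n → α, ((univ.filter (fun i => x i = u)).card : ℝ) *
      (univ.filter (fun i => x i ≠ u)).card
        = ∑ i, ∑ j, {x : Fin n → α | x i = u ∧ x j ≠ u}.indicator 1 x := fun x => by
    simp only [natCast_card_filter, sum_mul_sum, Set.indicator_apply, Set.mem_ofPred_eq,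
      Pi.one_apply, ite_zero_mul_ite_zero, mul_one]
  have hmeas : ∀ i j : Fin n, MeasurableSet {x : Fin n → α | x i = u ∧ x j ≠ u} :=
    fun i j => (Set.to_countable _).measurableSet
  have hint : ∀ i j : Fin n, Integrable
      ({x : Fin n → α | x i = u ∧ x j ≠ u}.indicator (1 : (Fin n → α) → ℝ))
      (Measure.pi fun _ => ν) := fun i j => (integrable_const (1 : ℝ)).indicator (hmeas i j)
  have hterm : ∀ i j : Fin n, (Measure.pi fun _ => ν).real {x | x i = u ∧ x j ≠ u}
      = θ * (1 - θ) - if i = j then θ * (1 - θ) else 0 := fun i j => by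
    split_ifs with hij
    · simp [hij]
    · simpa using measureReal_pi_eq_and_ne ν hij u
  simp_rw [hpair]
  rw [integral_finsetSum _ fun i _ => integrable_finsetSum _ fun j _ => hint i j]
  simp_rw [integral_finsetSum _ fun j _ => hint _ j, integral_indicator_one (hmeas _ _), hterm]
  simp only [sum_sub_distrib, sum_ite_eq, sum_const, mem_univ, if_true, card_univ,
    Fintype.card_fin, nsmul_eq_mul]
  ring

lemma integrable_comp_freq {μ : Measure (Fin n → α)} [IsFiniteMeasure μ] {g : ℝ → ℝ}
    (hg : ContinuousOn g (Set.Icc 0 1)) (u : α) : Integrable (fun x => g (freq x u)) μ := by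
  obtain ⟨C, hC⟩ := isCompact_Icc.exists_bound_of_continuousOn hg
  exact .of_bound (measurable_of_countable _).aestronglyMeasurable C
    (ae_of_all _ fun x => hC _ (freq_mem_Icc x u))

lemma integral_freq_mul_one_sub_freq (u : α) :
    ∫ x, freq x u * (1 - freq x u) ∂(Measure.pi fun _ : Fin n => ν)
      = (n - 1) / n * (ν.real {u} * (1 - ν.real {u})) := by
  rcases Nat.eq_zero_or_pos n with rfl | hn
  · simp [freq]
  have hfreq : ∀ x : Fin n → α, freq x u * (1 - freq x u) =
      ((univ.filter (fun i => x i = u)).card : ℝ) * (univ.filter (fun i => x i ≠ u)).card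
        / n ^ 2 := fun x => by
    have hcard : ((univ.filter (fun i => x i ≠ u)).card : ℝ)
        = n - (univ.filter (fun i => x i = u)).card := by
      rw [eq_sub_iff_add_eq', ← Nat.cast_add, card_filter_add_card_filter_not, card_univ,
        Fintype.card_fin]
    rw [freq, hcard]
    field_simp
  simp_rw [hfreq]
  rw [integral_div, integral_card_mul_card]
  field_simp

lemma pow_le_integral_pow_freq (hn : 2 ≤ n) (u : α) (k : ℕ) :
    (ν.real {u} * (1 - ν.real {u})) ^ k ≤ (n / (n - 1)) ^ k *
      ∫ x, (freq x u * (1 - freq x u)) ^ k ∂(Measure.pi fun _ : Fin n => ν) := by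
  have hn' : (1 : ℝ) < n := by exact_mod_cast hn
  set W : (Fin n → α) → ℝ := fun x => n / (n - 1) * (freq x u * (1 - freq x u))
  have hW : ∫ x, W x ∂(Measure.pi fun _ => ν) = ν.real {u} * (1 - ν.real {u}) := by
    rw [integral_const_mul, integral_freq_mul_one_sub_freq]
    field_simp [show (n : ℝ) - 1 ≠ 0 by linarith]
  have hW0 : ∀ x, W x ∈ Set.Ici 0 := fun x =>
    mul_nonneg (div_nonneg (by linarith) (by linarith))
      (mul_nonneg (freq_mem_Icc x u).1 (by linarith [(freq_mem_Icc x u).2]))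
  have hcont : ContinuousOn (fun q : ℝ => n / (n - 1) * (q * (1 - q))) (Set.Icc 0 1) := by
    fun_prop
  calc (ν.real {u} * (1 - ν.real {u})) ^ k
      = (∫ x, W x ∂(Measure.pi fun _ => ν)) ^ k := by rw [hW]
    _ ≤ ∫ x, W x ^ k ∂(Measure.pi fun _ => ν) :=
        (convexOn_pow k).map_integral_le (continuous_pow k).continuousOn isClosed_Ici
          (ae_of_all _ hW0) (integrable_comp_freq hcont u)
          (integrable_comp_freq ((continuous_pow k).comp_continuousOn hcont) u)
    _ = _ := by simp_rw [W, mul_pow]; exact integral_const_mul _ _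

variable {c : ℕ → ℝ} {d : ℕ}

lemma varPoly_le_integral_varPoly_freq (hn : 2 ≤ n) (hc : ∀ k ∈ Icc 1 d, 0 ≤ c k) (u : α) :
    varPoly c d (ν.real {u}) ≤ (n / (n - 1)) ^ d *
      ∫ x, varPoly c d (freq x u) ∂(Measure.pi fun _ : Fin n => ν) := by
  have hA : 1 ≤ (n : ℝ) / (n - 1) := by
    have hn' : (2 : ℝ) ≤ n := by exact_mod_cast hn
    rw [le_div_iff₀ (by linarith)]
    linarith
  simp only [varPoly]
  rw [integral_finsetSum _ fun k _ =>
    integrable_comp_freq (g := fun q => c k * (q * (1 - q)) ^ k) (by fun_prop) u, mul_sum]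
  refine sum_le_sum fun k hk => ?_
  have hmoment : 0 ≤ ∫ x, (freq x u * (1 - freq x u)) ^ k ∂(Measure.pi fun _ : Fin n => ν) :=
    integral_nonneg fun x => pow_nonneg (mul_nonneg (freq_mem_Icc x u).1
      (by linarith [(freq_mem_Icc x u).2])) k
  rw [integral_const_mul]
  calc c k * (ν.real {u} * (1 - ν.real {u})) ^ k
      ≤ c k * ((n / (n - 1)) ^ k *
          ∫ x, (freq x u * (1 - freq x u)) ^ k ∂(Measure.pi fun _ : Fin n => ν)) :=
        mul_le_mul_of_nonneg_left (pow_le_integral_pow_freq ν hn u k) (hc k hk)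
    _ ≤ c k * ((n / (n - 1)) ^ d *
          ∫ x, (freq x u * (1 - freq x u)) ^ k ∂(Measure.pi fun _ : Fin n => ν)) := by
        gcongr
        · exact hc k hk
        · exact (mem_Icc.1 hk).2
    _ = _ := by ring

theorem tsum_varPoly_le_integral (hn : 2 ≤ n) (hc : ∀ k ∈ Icc 1 d, 0 ≤ c k) :
    ∑' u, varPoly c d (ν.real {u}) ≤ (n / (n - 1)) ^ d *
      ∫ x, ∑' u, varPoly c d (freq x u) ∂(Measure.pi fun _ : Fin n => ν) := by
  refine Real.tsum_le_of_sum_le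
    (fun u => varPoly_nonneg c d hc ⟨measureReal_nonneg, measureReal_le_one⟩) fun s => ?_
  have hint : ∀ u, Integrable (fun x => varPoly c d (freq x u))
      (Measure.pi fun _ : Fin n => ν) :=
    integrable_comp_freq (by unfold varPoly; fun_prop)
  have hn' : (1 : ℝ) ≤ n := by exact_mod_cast (show 1 ≤ n by omega)
  calc ∑ u ∈ s, varPoly c d (ν.real {u})
      ≤ ∑ u ∈ s, (n / (n - 1)) ^ d *
          ∫ x, varPoly c d (freq x u) ∂(Measure.pi fun _ => ν) :=
        sum_le_sum fun u _ => varPoly_le_integral_varPoly_freq ν hn hc u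
    _ = (n / (n - 1)) ^ d *
          ∫ x, ∑ u ∈ s, varPoly c d (freq x u) ∂(Measure.pi fun _ => ν) := by
        rw [← mul_sum, integral_finsetSum _ fun u _ => hint u]
    _ ≤ _ := by
        refine mul_le_mul_of_nonneg_left ?_
          (pow_nonneg (div_nonneg (by linarith) (by linarith)) d)
        exact integral_mono (integrable_finsetSum _ fun u _ => hint u)
          (hasBoundedDifferences_tsum_varPoly_freq c d).integrable fun x =>
            (summable_varPoly_freq c d x).sum_le_tsum s
              fun u _ => varPoly_nonneg c d hc (freq_mem_Icc x u)

end Bias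

section Concentration

variable {n d : ℕ} {c : ℕ → ℝ}

lemma sqrt_mul_varPolyDerivSup_le_epsN (hc : ∀ k ∈ Icc 1 d, 0 ≤ c k) (δ : ℝ) :
    √((2 / n) * log (1 / δ)) * varPolyDerivSup c d ≤ epsN n d c δ := by
  refine mul_le_mul_of_nonneg_left (le_add_of_nonneg_right (sum_nonneg fun k hk => ?_))
    (sqrt_nonneg _)
  have := hc k hk
  have : (0 : ℝ) ≤ k - 1 := by
    have : (1 : ℝ) ≤ k := by exact_mod_cast (mem_Icc.1 hk).1
    linarith
  positivity

lemma exp_neg_epsN_sq_le (hn : 0 < n) (hc : ∀ k ∈ Icc 1 d, 0 ≤ c k)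
    (hG : 0 < varPolyDerivSup c d) {δ : ℝ} (hδ : δ ∈ Set.Ioo (0 : ℝ) 1) :
    exp (-2 * epsN n d c δ ^ 2 / (n * (2 * varPolyDerivSup c d / n) ^ 2)) ≤ δ := by
  set G := varPolyDerivSup c d
  set L := log (1 / δ) with hL_def
  have hL : 0 ≤ L := log_nonneg (by rw [le_one_div (by norm_num) hδ.1]; linarith [hδ.2])
  have hn' : (0 : ℝ) < n := by exact_mod_cast hn
  have hs : √((2 / n) * L) ^ 2 = (2 / n) * L := sq_sqrt (by positivity)
  have hε : (√((2 / n) * L) * G) ^ 2 ≤ epsN n d c δ ^ 2 :=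
    pow_le_pow_left₀ (by positivity) (sqrt_mul_varPolyDerivSup_le_epsN hc δ) 2
  have hL' : 2 * (√((2 / n) * L) * G) ^ 2 / (n * (2 * G / n) ^ 2) = L := by
    rw [mul_pow, hs]
    field_simp
  calc exp (-2 * epsN n d c δ ^ 2 / (n * (2 * G / n) ^ 2))
      ≤ exp (-L) := by
        rw [exp_le_exp, neg_mul, neg_div, neg_le_neg_iff, ← hL']
        gcongr
    _ = δ := by rw [hL_def, one_div, log_inv, neg_neg, exp_log hδ.1]

variable {α : Type*} [DecidableEq α] [MeasurableSpace α] [Countable α]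
  [MeasurableSingletonClass α] (ν : Measure α) [IsProbabilityMeasure ν]

theorem measure_pi_tsum_varPoly_le_ge (hn : 2 ≤ n) (hc : ∀ k ∈ Icc 1 d, 0 ≤ c k) {δ : ℝ}
    (hδ : δ ∈ Set.Ioo (0 : ℝ) 1) :
    (Measure.pi fun _ : Fin n => ν)
      {x | ∑' u, varPoly c d (ν.real {u})
        ≤ (n / (n - 1)) ^ d * (∑' u, varPoly c d (freq x u) + epsN n d c δ)}
      ≥ ENNReal.ofReal (1 - δ) := by
  set P := Measure.pi fun _ : Fin n => ν
  set F : (Fin n → α) → ℝ := fun x => ∑' u, varPoly c d (freq x u)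
  set E := {x | ∑' u, varPoly c d (ν.real {u}) ≤ (n / (n - 1)) ^ d * (F x + epsN n d c δ)}
  have hn' : (2 : ℝ) ≤ n := by exact_mod_cast hn
  have hA : 0 < ((n : ℝ) / (n - 1)) ^ d := pow_pos (div_pos (by linarith) (by linarith)) d
  have hε : 0 ≤ epsN n d c δ :=
    (mul_nonneg (sqrt_nonneg _) (varPolyDerivSup_nonneg c d)).trans
      (sqrt_mul_varPolyDerivSup_le_epsN hc δ)
  rcases (varPolyDerivSup_nonneg c d).eq_or_lt with hG | hG
  · -- `|f'| ≤ sup f' = 0` on `[0, 1]`, so `f = f 0 = 0` there and the event is sure.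
    have hzero : ∀ q ∈ Set.Icc (0 : ℝ) 1, varPoly c d q = 0 := fun q hq => by
      simpa [← hG, varPoly_zero] using abs_varPoly_sub_le c d hq ⟨le_rfl, zero_le_one⟩
    have hE : E = Set.univ := Set.eq_univ_of_forall fun x => by
      simp only [E, Set.mem_ofPred_eq, hzero _ ⟨measureReal_nonneg, measureReal_le_one⟩,
        tsum_zero]
      exact mul_nonneg hA.le
        (add_nonneg (tsum_nonneg fun u => varPoly_nonneg c d hc (freq_mem_Icc x u)) hε)
    rw [hE, measure_univ]
    exact ENNReal.ofReal_le_one.2 (by linarith [hδ.1])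
  · have hsub : Eᶜ ⊆ {x | epsN n d c δ ≤ ∫ y, F y ∂P - F x} := fun x hx => by
      simp only [E, Set.mem_compl_iff, Set.mem_ofPred_eq, not_le] at hx
      have := (mul_lt_mul_iff_right₀ hA).1 (hx.trans_le (tsum_varPoly_le_integral ν hn hc))
      simp only [Set.mem_ofPred_eq]
      linarith
    have htail : P.real Eᶜ ≤ δ :=
      (measureReal_mono hsub).trans <|
        ((hasBoundedDifferences_tsum_varPoly_freq c d).measureReal_le_integral_sub_le hε).trans
          (exp_neg_epsN_sq_le (by omega) hc hG hδ)
    rw [probReal_compl_eq_one_sub (Set.to_countable E).measurableSet] at htail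
    rw [ge_iff_le, ← ofReal_measureReal]
    exact ENNReal.ofReal_le_ofReal (by linarith)

end Concentration

theorem empirical_sum_concentration_general
    {𝒳 : Type*} [Countable 𝒳] [DecidableEq 𝒳]
    [MeasurableSpace 𝒳] [MeasurableSingletonClass 𝒳]
    {Ω : Type*} [MeasureSpace Ω] [IsProbabilityMeasure (ℙ : Measure Ω)]
    (p : 𝒳 → ℝ)
    (n : ℕ) (hn : 2 ≤ n)
    (X : Fin n → Ω → 𝒳) (hmeas : ∀ i, Measurable (X i))
    (hindep : iIndepFun X ℙ)
    (hdist : ∀ i u, (ℙ {ω | X i ω = u}).toReal = p u)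
    (d : ℕ)
    (c : ℕ → ℝ)
    (hcnonneg : ∀ k ∈ Finset.Icc 1 d, 0 ≤ c k)
    (δ₂ : ℝ) (hδ₂ : δ₂ ∈ Set.Ioo (0:ℝ) 1) :
    ℙ {ω | ∑' u, ∑ k ∈ Finset.Icc 1 d, c k * (p u * (1 - p u))^k ≤
        ((n:ℝ)/((n:ℝ)-1))^d * (empSum d c X ω + epsN n d c δ₂)}
      ≥ ENNReal.ofReal (1 - δ₂) := by
  set ν := (ℙ : Measure Ω).map (X ⟨0, by omega⟩)
  have : IsProbabilityMeasure ν := Measure.isProbabilityMeasure_map (hmeas _).aemeasurable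
  have hp : ∀ i u, ((ℙ : Measure Ω).map (X i)).real {u} = p u := fun i u => by
    rw [map_measureReal_apply (hmeas i) (measurableSet_singleton u)]
    exact hdist i u
  have hlaw : ∀ i, (ℙ : Measure Ω).map (X i) = ν := fun i =>
    Measure.ext_of_measureReal_singleton fun u => (hp i u).trans (hp _ u).symm
  have hsample : (ℙ : Measure Ω).map (fun ω i => X i ω) = Measure.pi fun _ => ν := by
    rw [hindep.map_fun_eq_pi_map fun i => (hmeas i).aemeasurable]
    simp_rw [hlaw]
  have key := measure_pi_tsum_varPoly_le_ge ν hn hcnonneg hδ₂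
  rw [← hsample, Measure.map_apply (measurable_pi_lambda _ hmeas)
    (Set.to_countable _).measurableSet] at key
  simp only [← hp ⟨0, by omega⟩]
  -- `empSum d c X ω` unfolds to `∑' u, varPoly c d (freq (fun i => X i ω) u)`.
  exact key

/-- **Proposition 1 (McDiarmid concentration of the empirical sum).**
With probability at least `1 - δ₂`,
`∑_u ∑_{k=1}^d c_k (p_u(1-p_u))^k ≤ (n/(n-1))^d (∑_u ∑_{k=1}^d c_k (p̂_u(1-p̂_u))^k + ε_n)`. -/
theorem empirical_sum_concentration
    {𝒳 : Type*} [Countable 𝒳] [DecidableEq 𝒳]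
    [MeasurableSpace 𝒳] [MeasurableSingletonClass 𝒳]
    {Ω : Type*} [MeasureSpace Ω] [IsProbabilityMeasure (ℙ : Measure Ω)]
    (p : 𝒳 → ℝ) (hp0 : ∀ u, 0 ≤ p u) (hp1 : ∑' u, p u = 1)
    (n : ℕ) (hn : 2 ≤ n)
    (X : Fin n → Ω → 𝒳) (hmeas : ∀ i, Measurable (X i))
    (hindep : iIndepFun X ℙ)
    (hdist : ∀ i u, (ℙ {ω | X i ω = u}).toReal = p u)
    (m : ℕ) (hm : Even m) (hm0 : 0 < m) (d : ℕ) (hd : d = m / 2)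
    (c : ℕ → ℝ) (hc : MomentIdentity n m d c)
    (hcnonneg : ∀ k ∈ Finset.Icc 1 d, 0 ≤ c k)
    (δ₂ : ℝ) (hδ₂ : δ₂ ∈ Set.Ioo (0:ℝ) 1) :
    ℙ {ω | ∑' u, ∑ k ∈ Finset.Icc 1 d, c k * (p u * (1 - p u))^k ≤
        ((n:ℝ)/((n:ℝ)-1))^d * (empSum d c X ω + epsN n d c δ₂)}
      ≥ ENNReal.ofReal (1 - δ₂) :=
  empirical_sum_concentration_general p n hn X hmeas hindep hdist d c hcnonneg δ₂ hδ₂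
end

section
/- Let X be a countable alphabet, p a probability distribution on X, and X_1,...,X_n (n ≥ 2) i.i.d. samples from p with empirical estimator p̂_u = #{i ≤ n : X_i = u}/n. Let d ≥ 1 be an integer and c_1,...,c_d nonnegative real numbers. Then E[ Σ_{u∈X} Σ_{k=1}^{d} c_k (p̂_u(1−p̂_u))^k ] ≥ (1 − 1/n)^{d} · Σ_{u∈X} Σ_{k=1}^{d} c_k (p_u(1−p_u))^k. -/
open MeasureTheory ProbabilityTheory Finset

/-! Write `p̂_u` as the mean of the `n` pairwise independent indicators of `{X_i = u}`:
then `E[p̂_u] = p_u` and `Var[p̂_u] = p_u (1 - p_u) / n`, so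
`E[p̂_u (1 - p̂_u)] = (1 - 1/n) p_u (1 - p_u)`. Jensen's inequality for `x ↦ x^k` gives
`E[(p̂_u (1 - p̂_u))^k] ≥ (1 - 1/n)^k (p_u (1 - p_u))^k ≥ (1 - 1/n)^d (p_u (1 - p_u))^k` for
`k ≤ d`. Summing over `u` commutes with the expectation because the `u`-th summand is dominated
by `(∑ c_k) p̂_u`, whose expectation `(∑ c_k) p_u` is summable. -/

lemma pow_mul_sum_le_sum_mul_pow {a t : ℝ} (ha0 : 0 ≤ a) (ha1 : a ≤ 1) (ht : 0 ≤ t)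
    {c : ℕ → ℝ} {d : ℕ} (hc : ∀ k ∈ Icc 1 d, 0 ≤ c k) :
    a ^ d * ∑ k ∈ Icc 1 d, c k * t ^ k ≤ ∑ k ∈ Icc 1 d, c k * (a * t) ^ k := by
  rw [mul_sum]
  refine sum_le_sum fun k hk => ?_
  have had : a ^ d ≤ a ^ k := pow_le_pow_of_le_one ha0 ha1 (mem_Icc.1 hk).2
  calc a ^ d * (c k * t ^ k) = c k * (a ^ d * t ^ k) := by ring
    _ ≤ c k * (a ^ k * t ^ k) := by gcongr; exact hc k hk
    _ = c k * (a * t) ^ k := by rw [mul_pow]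

lemma sum_mul_pow_le_sum_mul {w : ℝ} (hw0 : 0 ≤ w) (hw1 : w ≤ 1) {c : ℕ → ℝ} {d : ℕ}
    (hc : ∀ k ∈ Icc 1 d, 0 ≤ c k) :
    ∑ k ∈ Icc 1 d, c k * w ^ k ≤ (∑ k ∈ Icc 1 d, c k) * w := by
  rw [sum_mul]
  refine sum_le_sum fun k hk => mul_le_mul_of_nonneg_left ?_ (hc k hk)
  exact pow_le_of_le_one hw0 hw1 (by have := (mem_Icc.1 hk).1; omega)

lemma tsum_le_integral_tsum {Ω ι : Type*} [MeasurableSpace Ω] {μ : Measure Ω} [Countable ι]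
    {F : ι → Ω → ℝ} {a g : ι → ℝ} (hF0 : ∀ i ω, 0 ≤ F i ω) (hF : ∀ i, Integrable (F i) μ)
    (hg : Summable g) (hFg : ∀ i, ∫ ω, F i ω ∂μ ≤ g i) (haF : ∀ i, a i ≤ ∫ ω, F i ω ∂μ) :
    ∑' i, a i ≤ ∫ ω, ∑' i, F i ω ∂μ := by
  have hI : Summable fun i => ∫ ω, F i ω ∂μ :=
    hg.of_nonneg_of_le (fun i => integral_nonneg (hF0 i)) hFg
  rw [← integral_tsum_of_summable_integral_norm hF
    (by simpa only [Real.norm_of_nonneg (hF0 _ _)] using hI)]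
  by_cases ha : Summable a
  · exact ha.tsum_le_tsum haF hI
  · rw [tsum_eq_zero_of_not_summable ha]
    exact tsum_nonneg fun i => integral_nonneg (hF0 i)

section Moments
variable {Ω : Type*} [MeasurableSpace Ω] {μ : Measure Ω} [IsProbabilityMeasure μ]

lemma memLp_of_mem_Icc {Z : Ω → ℝ} (hZm : AEStronglyMeasurable Z μ)
    (hZ : ∀ ω, Z ω ∈ Set.Icc 0 1) (p : ENNReal) : MemLp Z p μ :=
  .of_bound hZm 1 (ae_of_all _ fun ω => abs_le.2 ⟨by linarith [(hZ ω).1], (hZ ω).2⟩)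

lemma integrable_pow_of_mem_Icc {Z : Ω → ℝ} (hZm : AEStronglyMeasurable Z μ)
    (hZ : ∀ ω, Z ω ∈ Set.Icc 0 1) (k : ℕ) : Integrable (fun ω => Z ω ^ k) μ :=
  (memLp_of_mem_Icc (hZm.pow k)
    (fun ω => ⟨pow_nonneg (hZ ω).1 k, pow_le_one₀ (hZ ω).1 (hZ ω).2⟩) 1).integrable le_rfl

lemma integrable_sum_mul_pow {Z : Ω → ℝ} (hZm : AEStronglyMeasurable Z μ)
    (hZ : ∀ ω, Z ω ∈ Set.Icc 0 1) (s : Finset ℕ) (c : ℕ → ℝ) :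
    Integrable (fun ω => ∑ k ∈ s, c k * Z ω ^ k) μ :=
  integrable_finsetSum s fun k _ => (integrable_pow_of_mem_Icc hZm hZ k).const_mul _

lemma pow_integral_le_integral_pow {Z : Ω → ℝ} (hZ0 : ∀ᵐ ω ∂μ, 0 ≤ Z ω) (hZ : Integrable Z μ)
    {k : ℕ} (hZk : Integrable (fun ω => Z ω ^ k) μ) :
    (∫ ω, Z ω ∂μ) ^ k ≤ ∫ ω, Z ω ^ k ∂μ :=
  (convexOn_pow k).map_integral_le (continuous_pow k).continuousOn isClosed_Ici hZ0 hZ hZk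

lemma sum_mul_pow_integral_le {Z : Ω → ℝ} (hZm : AEStronglyMeasurable Z μ)
    (hZ : ∀ ω, Z ω ∈ Set.Icc 0 1) {s : Finset ℕ} {c : ℕ → ℝ} (hc : ∀ k ∈ s, 0 ≤ c k) :
    ∑ k ∈ s, c k * (∫ ω, Z ω ∂μ) ^ k ≤ ∫ ω, ∑ k ∈ s, c k * Z ω ^ k ∂μ := by
  rw [integral_finsetSum _ fun k _ => (integrable_pow_of_mem_Icc hZm hZ k).const_mul _]
  refine sum_le_sum fun k hk => ?_
  rw [integral_const_mul]
  exact mul_le_mul_of_nonneg_left (pow_integral_le_integral_pow (ae_of_all _ fun ω => (hZ ω).1)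
    ((memLp_of_mem_Icc hZm hZ 1).integrable le_rfl) (integrable_pow_of_mem_Icc hZm hZ k)) (hc k hk)

lemma variance_indicator_one {A : Set Ω} (hA : MeasurableSet A) :
    Var[A.indicator 1; μ] = μ.real A * (1 - μ.real A) := by
  have hsq : A.indicator (1 : Ω → ℝ) ^ 2 = A.indicator 1 := by
    ext ω; by_cases h : ω ∈ A <;> simp [h]
  have hL : MemLp (A.indicator (1 : Ω → ℝ)) 2 μ :=
    memLp_top_const (μ := μ) (1 : ℝ) |>.indicator hA |>.mono_exponent le_top
  rw [variance_eq_sub hL, hsq, integral_indicator_one hA]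
  ring

lemma integral_mul_one_sub {Z : Ω → ℝ} (hZ : MemLp Z 2 μ) :
    ∫ ω, Z ω * (1 - Z ω) ∂μ = (∫ ω, Z ω ∂μ) * (1 - ∫ ω, Z ω ∂μ) - Var[Z; μ] := by
  have hZ1 := hZ.integrable one_le_two
  have hZ2 := hZ.integrable_sq
  simp only [mul_one_sub]
  rw [integral_sub hZ1 (by simpa only [sq] using hZ2), variance_eq_sub hZ]
  simp only [Pi.pow_apply, sq]
  ring

end Moments

section Empirical
variable {𝒳 Ω : Type*} [DecidableEq 𝒳] {n : ℕ} {X : Fin n → Ω → 𝒳}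

lemma emp_eq_inv_mul_sum_indicator (ω : Ω) (u : 𝒳) :
    emp X ω u = (n : ℝ)⁻¹ * ∑ i, (X i ⁻¹' {u}).indicator 1 ω := by
  rw [emp, card_filter, div_eq_inv_mul]
  push_cast
  simp only [Set.indicator, Set.mem_preimage, Set.mem_singleton_iff, Pi.one_apply]

lemma emp_mem_Icc (ω : Ω) (u : 𝒳) : emp X ω u ∈ Set.Icc (0 : ℝ) 1 := by
  refine ⟨by unfold emp; positivity, div_le_one_of_le₀ ?_ n.cast_nonneg⟩
  exact_mod_cast (card_filter_le _ _).trans_eq (card_fin n)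

lemma emp_mul_one_sub_emp_mem_Icc (ω : Ω) (u : 𝒳) :
    emp X ω u * (1 - emp X ω u) ∈ Set.Icc (0 : ℝ) 1 := by
  obtain ⟨h0, h1⟩ := emp_mem_Icc (X := X) ω u
  exact ⟨mul_nonneg h0 (by linarith), mul_le_one₀ h1 (by linarith) (by linarith)⟩

variable [MeasurableSpace 𝒳] [MeasurableSingletonClass 𝒳] [MeasurableSpace Ω]
  {μ : Measure Ω} [IsProbabilityMeasure μ]

lemma measurable_emp (hX : ∀ i, Measurable (X i)) (u : 𝒳) : Measurable fun ω => emp X ω u := by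
  simp only [emp_eq_inv_mul_sum_indicator]
  exact (Finset.measurable_sum _ fun i _ =>
    measurable_one.indicator (hX i (measurableSet_singleton u))).const_mul _

lemma integral_emp (hX : ∀ i, Measurable (X i)) (hn : n ≠ 0) {u : 𝒳} {q : ℝ}
    (hq : ∀ i, μ.real (X i ⁻¹' {u}) = q) : ∫ ω, emp X ω u ∂μ = q := by
  simp only [emp_eq_inv_mul_sum_indicator]
  rw [integral_const_mul, integral_finsetSum _ fun i _ =>
    (integrable_const 1).indicator (hX i (measurableSet_singleton u))]
  simp only [integral_indicator_one (hX _ (measurableSet_singleton u)), hq, sum_const, card_univ,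
    Fintype.card_fin, nsmul_eq_mul]
  field_simp

lemma variance_emp (hX : ∀ i, Measurable (X i))
    (hindep : Pairwise fun i j => IndepFun (X i) (X j) μ) {u : 𝒳} {q : ℝ}
    (hq : ∀ i, μ.real (X i ⁻¹' {u}) = q) : Var[fun ω => emp X ω u; μ] = q * (1 - q) / n := by
  have hA : ∀ i, MeasurableSet (X i ⁻¹' {u}) := fun i => hX i (measurableSet_singleton u)
  have hemp : (fun ω => emp X ω u) = (n : ℝ)⁻¹ • ∑ i, (X i ⁻¹' {u}).indicator 1 := by
    ext ω; simp [emp_eq_inv_mul_sum_indicator, Finset.sum_apply]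
  rw [hemp, variance_smul, IndepFun.variance_sum]
  · simp only [variance_indicator_one (hA _), hq, sum_const, card_univ, Fintype.card_fin,
      nsmul_eq_mul]
    rcases eq_or_ne n 0 with rfl | hn
    · simp
    · field_simp
  · exact fun i _ => memLp_top_const (μ := μ) (1 : ℝ) |>.indicator (hA i) |>.mono_exponent le_top
  · intro i _ j _ hij
    exact (hindep hij).comp (measurable_one.indicator (measurableSet_singleton u))
      (measurable_one.indicator (measurableSet_singleton u))

lemma measurable_emp_mul_one_sub_emp (hX : ∀ i, Measurable (X i)) (u : 𝒳) :
    Measurable fun ω => emp X ω u * (1 - emp X ω u) :=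
  (measurable_emp hX u).mul (measurable_const.sub (measurable_emp hX u))

lemma integral_emp_mul_one_sub_emp (hX : ∀ i, Measurable (X i))
    (hindep : Pairwise fun i j => IndepFun (X i) (X j) μ) (hn : n ≠ 0) {u : 𝒳} {q : ℝ}
    (hq : ∀ i, μ.real (X i ⁻¹' {u}) = q) :
    ∫ ω, emp X ω u * (1 - emp X ω u) ∂μ = (1 - 1 / n) * (q * (1 - q)) := by
  rw [integral_mul_one_sub (memLp_of_mem_Icc (measurable_emp hX u).aestronglyMeasurable
    (emp_mem_Icc · u) 2), integral_emp hX hn hq, variance_emp hX hindep hq]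
  ring

lemma pow_mul_sum_le_integral_sum_emp (hX : ∀ i, Measurable (X i))
    (hindep : Pairwise fun i j => IndepFun (X i) (X j) μ) (hn : n ≠ 0) {u : 𝒳} {q : ℝ}
    (hq : ∀ i, μ.real (X i ⁻¹' {u}) = q) {c : ℕ → ℝ} {d : ℕ} (hc : ∀ k ∈ Icc 1 d, 0 ≤ c k) :
    (1 - 1 / n : ℝ) ^ d * ∑ k ∈ Icc 1 d, c k * (q * (1 - q)) ^ k ≤
      ∫ ω, ∑ k ∈ Icc 1 d, c k * (emp X ω u * (1 - emp X ω u)) ^ k ∂μ := by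
  have hq01 : q ∈ Set.Icc 0 1 := hq ⟨0, by omega⟩ ▸ ⟨measureReal_nonneg, measureReal_le_one⟩
  have hn1 : (1 : ℝ) ≤ n := by exact_mod_cast Nat.one_le_iff_ne_zero.2 hn
  calc _ ≤ ∑ k ∈ Icc 1 d, c k * ((1 - 1 / n) * (q * (1 - q))) ^ k :=
        pow_mul_sum_le_sum_mul_pow (sub_nonneg.2 (div_le_one_of_le₀ hn1 n.cast_nonneg))
          (sub_le_self _ (by positivity)) (mul_nonneg hq01.1 (sub_nonneg.2 hq01.2)) hc
    _ = ∑ k ∈ Icc 1 d, c k * (∫ ω, emp X ω u * (1 - emp X ω u) ∂μ) ^ k := by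
        rw [integral_emp_mul_one_sub_emp hX hindep hn hq]
    _ ≤ _ := sum_mul_pow_integral_le (measurable_emp_mul_one_sub_emp hX u).aestronglyMeasurable
        (emp_mul_one_sub_emp_mem_Icc · u) hc

lemma integral_sum_emp_le (hX : ∀ i, Measurable (X i)) (hn : n ≠ 0) {u : 𝒳} {q : ℝ}
    (hq : ∀ i, μ.real (X i ⁻¹' {u}) = q) {c : ℕ → ℝ} {d : ℕ} (hc : ∀ k ∈ Icc 1 d, 0 ≤ c k) :
    ∫ ω, ∑ k ∈ Icc 1 d, c k * (emp X ω u * (1 - emp X ω u)) ^ k ∂μ ≤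
      (∑ k ∈ Icc 1 d, c k) * q := by
  have hemp := measurable_emp hX u
  have hW := measurable_emp_mul_one_sub_emp hX u
  rw [← integral_emp hX hn hq, ← integral_const_mul]
  refine integral_mono
    (integrable_sum_mul_pow hW.aestronglyMeasurable (emp_mul_one_sub_emp_mem_Icc · u) _ _)
    (((memLp_of_mem_Icc hemp.aestronglyMeasurable (emp_mem_Icc · u) 1).integrable
      le_rfl).const_mul _)
    fun ω => ?_
  obtain ⟨h0, h1⟩ := emp_mul_one_sub_emp_mem_Icc (X := X) ω u
  refine (sum_mul_pow_le_sum_mul h0 h1 hc).trans (mul_le_mul_of_nonneg_left ?_ (sum_nonneg hc))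
  obtain ⟨e0, e1⟩ := emp_mem_Icc (X := X) ω u
  exact mul_le_of_le_one_right e0 (by linarith)

end Empirical

theorem expected_empirical_sum_lower_bound_general
    {𝒳 : Type*} [Countable 𝒳] [DecidableEq 𝒳]
    [MeasurableSpace 𝒳] [MeasurableSingletonClass 𝒳]
    {Ω : Type*} [MeasureSpace Ω] [IsProbabilityMeasure (ℙ : Measure Ω)]
    (p : 𝒳 → ℝ) (hp1 : ∑' u, p u = 1)
    (n : ℕ) (hn : 2 ≤ n)
    (X : Fin n → Ω → 𝒳) (hmeas : ∀ i, Measurable (X i))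
    (hindep : iIndepFun X ℙ)
    (hdist : ∀ i u, (ℙ {ω | X i ω = u}).toReal = p u)
    (d : ℕ)
    (c : ℕ → ℝ) (hcnonneg : ∀ k ∈ Finset.Icc 1 d, 0 ≤ c k) :
    (1 - 1/(n:ℝ))^d * ∑' u, ∑ k ∈ Finset.Icc 1 d, c k * (p u * (1 - p u))^k ≤
      ∫ ω, (∑' u, ∑ k ∈ Finset.Icc 1 d, c k * (emp X ω u * (1 - emp X ω u))^k) ∂ℙ := by
  have hn0 : n ≠ 0 := by omega
  have hp : Summable p := by
    by_contra h
    simp [tsum_eq_zero_of_not_summable h] at hp1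
  have hpair : Pairwise fun i j => IndepFun (X i) (X j) ℙ := fun i j hij => hindep.indepFun hij
  rw [← tsum_mul_left]
  exact tsum_le_integral_tsum
    (fun u ω => sum_nonneg fun k hk =>
      mul_nonneg (hcnonneg k hk) (pow_nonneg (emp_mul_one_sub_emp_mem_Icc ω u).1 k))
    (fun u => integrable_sum_mul_pow (measurable_emp_mul_one_sub_emp hmeas u).aestronglyMeasurable
      (emp_mul_one_sub_emp_mem_Icc · u) _ _)
    (hp.mul_left _) (fun u => integral_sum_emp_le hmeas hn0 (hdist · u) hcnonneg)
    (fun u => pow_mul_sum_le_integral_sum_emp hmeas hpair hn0 (hdist · u) hcnonneg)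

/-- **Jensen step (eq. (19)).**
`E[∑_u ∑_{k=1}^d c_k (p̂_u(1-p̂_u))^k] ≥ (1 - 1/n)^d ∑_u ∑_{k=1}^d c_k (p_u(1-p_u))^k`. -/
theorem expected_empirical_sum_lower_bound
    {𝒳 : Type*} [Countable 𝒳] [DecidableEq 𝒳]
    [MeasurableSpace 𝒳] [MeasurableSingletonClass 𝒳]
    {Ω : Type*} [MeasureSpace Ω] [IsProbabilityMeasure (ℙ : Measure Ω)]
    (p : 𝒳 → ℝ) (hp0 : ∀ u, 0 ≤ p u) (hp1 : ∑' u, p u = 1)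
    (n : ℕ) (hn : 2 ≤ n)
    (X : Fin n → Ω → 𝒳) (hmeas : ∀ i, Measurable (X i))
    (hindep : iIndepFun X ℙ)
    (hdist : ∀ i u, (ℙ {ω | X i ω = u}).toReal = p u)
    (d : ℕ) (hd : 1 ≤ d)
    (c : ℕ → ℝ) (hcnonneg : ∀ k ∈ Finset.Icc 1 d, 0 ≤ c k) :
    (1 - 1/(n:ℝ))^d * ∑' u, ∑ k ∈ Finset.Icc 1 d, c k * (p u * (1 - p u))^k ≤
      ∫ ω, (∑' u, ∑ k ∈ Finset.Icc 1 d, c k * (emp X ω u * (1 - emp X ω u))^k) ∂ℙ :=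
  expected_empirical_sum_lower_bound_general p hp1 n hn X hmeas hindep hdist d c hcnonneg
end

section
/- Let X be a countable alphabet, p a probability distribution on X, and X_1,...,X_n i.i.d. samples from p with empirical estimator p̂_u = #{i ≤ n : X_i = u}/n. Fix a positive even integer m with d = m/2 and δ_1, δ_2 ∈ (0,1), and for each n let c_{k,m,n} (1 ≤ k ≤ d) be nonnegative coefficients satisfying the binomial central-moment identity and the growth bound c_{k,m,n} ≤ k^{m−k} n^k for all 1 ≤ k ≤ d. Then there exists a constant C > 0, depending only on m, δ_1 and δ_2, such that for every n ≥ 2 and every realization of the sample, R_{δ_1,δ_2,m}(X^n) ≤ (1/n)·(c_{d,m,n}/δ_1)^{1/m}·( Σ_{u∈X} (p̂_u(1−p̂_u))^{d} )^{1/m} + C·n^{−(1/2)(1 + 1/m)}, where R_{δ_1,δ_2,m}(X^n) = (1/n)·√(n/(n−1))·( (1/δ_1)·( Σ_{u∈X} Σ_{k=1}^{d} c_{k,m,n} (p̂_u(1−p̂_u))^k + ε_n ) )^{1/m} and ε_n = √( (2/n)·log(1/δ_2) ) · ( sup_{q∈[0,1]} Σ_{k=1}^{d} c_{k,m,n} k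 (q(1−q))^{k−1}(1−2q) + Σ_{k=1}^{d} c_{k,m,n} k(k−1)/(n·2^{2k−3}) ). -/
open MeasureTheory ProbabilityTheory Finset

/-!
Since `p̂_u (1 - p̂_u) ≤ p̂_u` and `∑_u p̂_u = 1`, each sum `∑_u (p̂_u (1 - p̂_u))^k` with `k ≥ 1`
lies in `[0, 1]`. With the growth bound `c_k ≤ k^(m-k) n^k`, everything in the radicand of `R`
except `c_d ∑_u (p̂_u (1 - p̂_u))^d` is `O(n^(d - 1/2))`: the lower-order terms are `O(n^(d-1))`,
and `ε_n` is `n^(-1/2)` times quantities of order `n^d`. Subadditivity of `t ↦ t^(1/m)`,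
`√(n/(n-1)) ≤ 1 + 1/n` and `d/m = 1/2` turn this remainder, together with the `1/n²` part of the
main term, into `O(n^(-(1 + 1/m)/2))`.
-/

open Finset

section Empirical

variable {𝒳 : Type*} [DecidableEq 𝒳] {Ω : Type*} {n : ℕ} (X : Fin n → Ω → 𝒳) (ω : Ω)

noncomputable def empVarSum (k : ℕ) : ℝ :=
  ∑' u, (emp X ω u * (1 - emp X ω u)) ^ k

lemma emp_nonneg (u : 𝒳) : 0 ≤ emp X ω u := by
  unfold emp; positivity

lemma emp_le_one (u : 𝒳) : emp X ω u ≤ 1 :=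
  div_le_one_of_le₀ (by exact_mod_cast (card_filter_le _ _).trans (card_fin n).le) n.cast_nonneg

lemma emp_eq_zero_of_notMem {u : 𝒳} (hu : u ∉ univ.image (X · ω)) : emp X ω u = 0 := by
  have : univ.filter (fun i => X i ω = u) = ∅ :=
    filter_eq_empty_iff.2 fun i _ hi => hu (mem_image.2 ⟨i, mem_univ i, hi⟩)
  simp [emp, this]

lemma tsum_emp (hn : n ≠ 0) : ∑' u, emp X ω u = 1 := by
  rw [tsum_eq_sum fun u hu => emp_eq_zero_of_notMem X ω hu]
  simp only [emp]
  rw [← sum_div, div_eq_one_iff_eq (by exact_mod_cast hn)]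
  exact_mod_cast (card_eq_sum_card_image (X · ω) univ).symm.trans (card_fin n)

lemma emp_mul_one_sub_nonneg (u : 𝒳) : 0 ≤ emp X ω u * (1 - emp X ω u) :=
  mul_nonneg (emp_nonneg X ω u) (sub_nonneg.2 (emp_le_one X ω u))

lemma empVarSum_nonneg (k : ℕ) : 0 ≤ empVarSum X ω k :=
  tsum_nonneg fun u => pow_nonneg (emp_mul_one_sub_nonneg X ω u) k

lemma summable_emp_mul_one_sub_pow {k : ℕ} (hk : k ≠ 0) :
    Summable fun u => (emp X ω u * (1 - emp X ω u)) ^ k :=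
  summable_of_ne_finset_zero (s := univ.image (X · ω)) fun u hu => by
    simp [emp_eq_zero_of_notMem X ω hu, hk]

lemma empVarSum_le_one (hn : n ≠ 0) {k : ℕ} (hk : k ≠ 0) : empVarSum X ω k ≤ 1 := by
  refine (Summable.tsum_le_tsum (fun u => ?_) (summable_emp_mul_one_sub_pow X ω hk)
    (summable_of_ne_finset_zero fun u hu => emp_eq_zero_of_notMem X ω hu)).trans
    (tsum_emp X ω hn).le
  have h0 := emp_nonneg X ω u
  have h1 := emp_le_one X ω u
  calc (emp X ω u * (1 - emp X ω u)) ^ k ≤ emp X ω u * (1 - emp X ω u) :=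
        pow_le_of_le_one (emp_mul_one_sub_nonneg X ω u) (by nlinarith) hk
    _ ≤ emp X ω u := by nlinarith

lemma empSum_eq_sum (d : ℕ) (c : ℕ → ℝ) :
    empSum d c X ω = ∑ k ∈ Icc 1 d, c k * empVarSum X ω k := by
  rw [empSum, Summable.tsum_finsetSum fun k hk =>
    (summable_emp_mul_one_sub_pow X ω (by grind)).mul_left (c k)]
  exact sum_congr rfl fun k _ => tsum_mul_left

lemma empSum_nonneg {d : ℕ} {c : ℕ → ℝ} (hc0 : ∀ k ∈ Icc 1 d, 0 ≤ c k) :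
    0 ≤ empSum d c X ω := by
  rw [empSum_eq_sum]
  exact sum_nonneg fun k hk => mul_nonneg (hc0 k hk) (empVarSum_nonneg X ω k)

end Empirical

section Coefficients

variable {m n d : ℕ} {c : ℕ → ℝ}

lemma sum_mul_le_of_growth {s : Finset ℕ} {e : ℕ} {w : ℕ → ℝ} (hn : n ≠ 0)
    (hcg : ∀ k ∈ s, c k ≤ (k:ℝ) ^ (m - k) * (n:ℝ) ^ k) (hse : ∀ k ∈ s, k ≤ e)
    (hw : ∀ k ∈ s, 0 ≤ w k) :
    ∑ k ∈ s, c k * w k ≤ (∑ k ∈ s, (k:ℝ) ^ (m - k) * w k) * (n:ℝ) ^ e := by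
  have hn1 : (1:ℝ) ≤ n := by exact_mod_cast Nat.one_le_iff_ne_zero.2 hn
  rw [sum_mul]
  refine sum_le_sum fun k hk => ?_
  calc c k * w k ≤ (k:ℝ) ^ (m - k) * (n:ℝ) ^ k * w k :=
        mul_le_mul_of_nonneg_right (hcg k hk) (hw k hk)
    _ ≤ (k:ℝ) ^ (m - k) * (n:ℝ) ^ e * w k := by
        have := hw k hk
        gcongr
        exact hse k hk
    _ = (k:ℝ) ^ (m - k) * w k * (n:ℝ) ^ e := by ring

lemma epsN_nonneg (hc0 : ∀ k ∈ Icc 1 d, 0 ≤ c k) (δ₂ : ℝ) : 0 ≤ epsN n d c δ₂ := by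
  -- `2 ∉ [0, 1]`, so the inner supremum at `q = 2` is over an empty index type, hence `0`.
  refine mul_nonneg (Real.sqrt_nonneg _) (add_nonneg (Real.iSup_nonneg' ⟨2, by norm_num⟩)
    (sum_nonneg fun k hk => ?_))
  have hk1 : (1:ℝ) ≤ k := by exact_mod_cast (mem_Icc.1 hk).1
  exact div_nonneg (mul_nonneg (mul_nonneg (hc0 k hk) (by linarith)) (by linarith)) (by positivity)

variable (hc0 : ∀ k ∈ Icc 1 d, 0 ≤ c k)
  (hcg : ∀ k ∈ Icc 1 d, c k ≤ (k:ℝ) ^ (m - k) * (n:ℝ) ^ k)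
include hc0 hcg

lemma empSum_le {𝒳 Ω : Type*} [DecidableEq 𝒳] (X : Fin n → Ω → 𝒳) (ω : Ω) (hn : n ≠ 0)
    (hd : d ≠ 0) :
    empSum d c X ω ≤
      c d * empVarSum X ω d + (∑ k ∈ Icc 1 (d - 1), (k:ℝ) ^ (m - k)) * (n:ℝ) ^ (d - 1) := by
  obtain ⟨e, rfl⟩ := Nat.exists_eq_succ_of_ne_zero hd
  have hsub : Icc 1 e ⊆ Icc 1 (e + 1) := Icc_subset_Icc_right e.le_succ
  have hlow := sum_mul_le_of_growth (w := fun _ => 1) hn (fun k hk => hcg k (hsub hk))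
    (fun k hk => (mem_Icc.1 hk).2) (fun _ _ => zero_le_one)
  simp only [mul_one] at hlow
  rw [empSum_eq_sum, sum_Icc_succ_top (by omega), add_comm, Nat.succ_sub_one]
  gcongr
  calc ∑ k ∈ Icc 1 e, c k * empVarSum X ω k ≤ ∑ k ∈ Icc 1 e, c k :=
        sum_le_sum fun k hk => mul_le_of_le_one_right (hc0 k (hsub hk))
          (empVarSum_le_one X ω hn (by grind))
    _ ≤ _ := hlow

lemma iSup_sum_deriv_le (hn : n ≠ 0) :
    (⨆ q ∈ Set.Icc (0:ℝ) 1, ∑ k ∈ Icc 1 d, c k * k * (q * (1 - q)) ^ (k - 1) * (1 - 2 * q))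
      ≤ (∑ k ∈ Icc 1 d, (k:ℝ) ^ (m - k) * k) * (n:ℝ) ^ d := by
  have hB : 0 ≤ (∑ k ∈ Icc 1 d, (k:ℝ) ^ (m - k) * k) * (n:ℝ) ^ d := by positivity
  refine Real.iSup_le (fun q => Real.iSup_le (fun hq => ?_) hB) hB
  refine (sum_le_sum fun k hk => ?_).trans
    (sum_mul_le_of_growth hn hcg (fun k hk => (mem_Icc.1 hk).2) (fun k _ => k.cast_nonneg))
  obtain ⟨hq0, hq1⟩ := hq
  have hx0 : 0 ≤ q * (1 - q) := by nlinarith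
  have hck : 0 ≤ c k * k := mul_nonneg (hc0 k hk) k.cast_nonneg
  calc c k * k * (q * (1 - q)) ^ (k - 1) * (1 - 2 * q) ≤ c k * k * (q * (1 - q)) ^ (k - 1) :=
        mul_le_of_le_one_right (mul_nonneg hck (pow_nonneg hx0 _)) (by linarith)
    _ ≤ c k * k := mul_le_of_le_one_right hck (pow_le_one₀ hx0 (by nlinarith))

lemma sum_second_order_le (hn : n ≠ 0) :
    ∑ k ∈ Icc 1 d, c k * k * ((k:ℝ) - 1) / ((n:ℝ) * (2:ℝ) ^ (2 * (k:ℤ) - 3))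
      ≤ (∑ k ∈ Icc 1 d, (k:ℝ) ^ (m - k) * (2 * k * (k - 1))) * (n:ℝ) ^ d := by
  have hn1 : (1:ℝ) ≤ n := by exact_mod_cast Nat.one_le_iff_ne_zero.2 hn
  have hk1 : ∀ k ∈ Icc 1 d, (1:ℝ) ≤ k := fun k hk => by exact_mod_cast (mem_Icc.1 hk).1
  refine (sum_le_sum fun k hk => ?_).trans (sum_mul_le_of_growth hn hcg
    (fun k hk => (mem_Icc.1 hk).2) (fun k hk => by nlinarith [hk1 k hk]))
  have hden : 1 / 2 ≤ (n:ℝ) * (2:ℝ) ^ (2 * (k:ℤ) - 3) :=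
    calc (1:ℝ) / 2 = 1 * (2:ℝ) ^ (-1:ℤ) := by norm_num
      _ ≤ (n:ℝ) * (2:ℝ) ^ (2 * (k:ℤ) - 3) := by
        gcongr
        · norm_num
        · have := (mem_Icc.1 hk).1
          omega
  rw [div_le_iff₀ (by linarith)]
  calc c k * k * (k - 1) = c k * (2 * k * (k - 1)) * (1 / 2) := by ring
    _ ≤ c k * (2 * k * (k - 1)) * ((n:ℝ) * (2:ℝ) ^ (2 * (k:ℤ) - 3)) :=
      mul_le_mul_of_nonneg_left hden (mul_nonneg (hc0 k hk) (by nlinarith [hk1 k hk]))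

lemma epsN_le (hn : n ≠ 0) (δ₂ : ℝ) :
    epsN n d c δ₂ ≤ √(2 * Real.log (1 / δ₂)) *
      (∑ k ∈ Icc 1 d, (k:ℝ) ^ (m - k) * k + ∑ k ∈ Icc 1 d, (k:ℝ) ^ (m - k) * (2 * k * (k - 1)))
      * (n:ℝ) ^ ((d:ℝ) - 1 / 2) := by
  have hsqrt : √(2 / (n:ℝ) * Real.log (1 / δ₂)) =
      √(2 * Real.log (1 / δ₂)) * (n:ℝ) ^ (-(1 / 2) : ℝ) := by
    rw [div_mul_eq_mul_div, div_eq_mul_inv, Real.sqrt_mul' _ (by positivity), Real.sqrt_inv,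
      Real.sqrt_eq_rpow (n:ℝ), Real.rpow_neg n.cast_nonneg]
  have hpow : (n:ℝ) ^ ((d:ℝ) - 1 / 2) = (n:ℝ) ^ (-(1 / 2) : ℝ) * (n:ℝ) ^ d := by
    rw [sub_eq_add_neg, Real.rpow_add (by positivity), Real.rpow_natCast, mul_comm]
  calc epsN n d c δ₂ = √(2 * Real.log (1 / δ₂)) * (n:ℝ) ^ (-(1 / 2) : ℝ) *
        ((⨆ q ∈ Set.Icc (0:ℝ) 1,
          ∑ k ∈ Icc 1 d, c k * k * (q * (1 - q)) ^ (k - 1) * (1 - 2 * q)) +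
        ∑ k ∈ Icc 1 d, c k * k * ((k:ℝ) - 1) / ((n:ℝ) * (2:ℝ) ^ (2 * (k:ℤ) - 3))) := by
        rw [epsN, hsqrt]
    _ ≤ √(2 * Real.log (1 / δ₂)) * (n:ℝ) ^ (-(1 / 2) : ℝ) *
        ((∑ k ∈ Icc 1 d, (k:ℝ) ^ (m - k) * k) * (n:ℝ) ^ d +
          (∑ k ∈ Icc 1 d, (k:ℝ) ^ (m - k) * (2 * k * (k - 1))) * (n:ℝ) ^ d) := by
        gcongr
        exacts [iSup_sum_deriv_le hc0 hcg hn, sum_second_order_le hc0 hcg hn]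
    _ = _ := by rw [hpow]; ring

end Coefficients

noncomputable def remainderCoeff (m d : ℕ) (δ₂ : ℝ) : ℝ :=
  ∑ k ∈ Icc 1 (d - 1), (k:ℝ) ^ (m - k) + √(2 * Real.log (1 / δ₂)) *
    (∑ k ∈ Icc 1 d, (k:ℝ) ^ (m - k) * k + ∑ k ∈ Icc 1 d, (k:ℝ) ^ (m - k) * (2 * k * (k - 1)))

lemma remainderCoeff_nonneg (m d : ℕ) (δ₂ : ℝ) : 0 ≤ remainderCoeff m d δ₂ := by
  have hA₃ : 0 ≤ ∑ k ∈ Icc 1 d, (k:ℝ) ^ (m - k) * (2 * k * (k - 1)) :=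
    sum_nonneg fun k hk => by
      have hk1 : (1:ℝ) ≤ k := by exact_mod_cast (mem_Icc.1 hk).1
      have := sub_nonneg.2 hk1
      positivity
  unfold remainderCoeff
  positivity

lemma empSum_add_epsN_le {m n d : ℕ} {c : ℕ → ℝ} {𝒳 Ω : Type*} [DecidableEq 𝒳]
    (X : Fin n → Ω → 𝒳) (ω : Ω) (hn : n ≠ 0) (hd : d ≠ 0) (hc0 : ∀ k ∈ Icc 1 d, 0 ≤ c k)
    (hcg : ∀ k ∈ Icc 1 d, c k ≤ (k:ℝ) ^ (m - k) * (n:ℝ) ^ k) (δ₂ : ℝ) :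
    empSum d c X ω + epsN n d c δ₂ ≤
      c d * empVarSum X ω d + remainderCoeff m d δ₂ * (n:ℝ) ^ ((d:ℝ) - 1 / 2) := by
  have hn1 : (1:ℝ) ≤ n := by exact_mod_cast Nat.one_le_iff_ne_zero.2 hn
  have hpow : (n:ℝ) ^ (d - 1) ≤ (n:ℝ) ^ ((d:ℝ) - 1 / 2) := by
    rw [← Real.rpow_natCast, Nat.cast_sub (Nat.one_le_iff_ne_zero.2 hd), Nat.cast_one]
    exact Real.rpow_le_rpow_of_exponent_le hn1 (by linarith)
  have hA₁ : 0 ≤ ∑ k ∈ Icc 1 (d - 1), (k:ℝ) ^ (m - k) := by positivity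
  have hlow := mul_le_mul_of_nonneg_left hpow hA₁
  have hS := empSum_le hc0 hcg X ω hn hd
  have hε := epsN_le hc0 hcg hn δ₂
  unfold remainderCoeff
  linarith

lemma sqrt_div_sub_one_le {x : ℝ} (hx : 2 ≤ x) : √(x / (x - 1)) ≤ 1 + 1 / x := by
  rw [Real.sqrt_le_iff]
  refine ⟨by positivity, ?_⟩
  rw [div_le_iff₀ (by linarith)]
  have hx0 : 0 < x := by linarith
  field_simp
  nlinarith

lemma rpow_div_le_of_le_add {z a b u v δ r : ℝ} (hz : 0 ≤ z) (ha : 0 ≤ a) (hb : 0 ≤ b)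
    (hu : 0 ≤ u) (hv : 0 ≤ v) (hδ : 0 < δ) (hr0 : 0 ≤ r) (hr1 : r ≤ 1)
    (h : z ≤ a * u + b * v) :
    (1 / δ * z) ^ r ≤ (a / δ) ^ r * u ^ r + (b / δ) ^ r * v ^ r := by
  calc (1 / δ * z) ^ r ≤ (a / δ * u + b / δ * v) ^ r := by
        refine Real.rpow_le_rpow (by positivity) ?_ hr0
        calc 1 / δ * z ≤ 1 / δ * (a * u + b * v) := by gcongr
          _ = a / δ * u + b / δ * v := by ring
    _ ≤ (a / δ * u) ^ r + (b / δ * v) ^ r :=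
        Real.rpow_add_le_add_rpow (by positivity) (by positivity) hr0 hr1
    _ = (a / δ) ^ r * u ^ r + (b / δ) ^ r * v ^ r := by
        rw [Real.mul_rpow (by positivity) hu, Real.mul_rpow (by positivity) hv]

lemma Rb_le_of_radicand_le {n d m : ℕ} {c : ℕ → ℝ} {δ₁ δ₂ S T K : ℝ} (hn : 2 ≤ n)
    (hm : m = 2 * d) (hd : d ≠ 0) (hδ₁ : 0 < δ₁) (hK : 0 ≤ K) (hT0 : 0 ≤ T) (hT1 : T ≤ 1)
    (hcd0 : 0 ≤ c d) (hcd : c d ≤ (d:ℝ) ^ (m - d) * (n:ℝ) ^ d) (hR0 : 0 ≤ S + epsN n d c δ₂)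
    (hR : S + epsN n d c δ₂ ≤ c d * T + K * (n:ℝ) ^ ((d:ℝ) - 1 / 2)) :
    Rb n d m c δ₁ δ₂ S ≤ 1 / n * (c d / δ₁) ^ (1 / m : ℝ) * T ^ (1 / m : ℝ) +
      (((d:ℝ) ^ (m - d) / δ₁) ^ (1 / m : ℝ) + 2 * (K / δ₁) ^ (1 / m : ℝ)) *
        (n:ℝ) ^ (-(1 / 2 : ℝ) * (1 + 1 / m)) := by
  set r : ℝ := 1 / m with hr
  have hn2 : (2:ℝ) ≤ n := by exact_mod_cast hn
  have hn0 : (0:ℝ) < n := by linarith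
  have hd1 : (1:ℝ) ≤ d := by exact_mod_cast Nat.one_le_iff_ne_zero.2 hd
  have hmr : (m:ℝ) = 2 * d := by exact_mod_cast hm
  have hr0 : 0 ≤ r := by positivity
  have hr1 : r ≤ 1 := by rw [hr, hmr, div_le_one (by positivity)]; linarith
  have hdr : (d:ℝ) * r = 1 / 2 := by rw [hr, hmr]; field_simp
  have hroot : (1 / δ₁ * (S + epsN n d c δ₂)) ^ r ≤
      (c d / δ₁) ^ r * T ^ r + (K / δ₁) ^ r * (n:ℝ) ^ (((d:ℝ) - 1 / 2) * r) := by
    rw [Real.rpow_mul hn0.le]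
    exact rpow_div_le_of_le_add hR0 hcd0 hK hT0 (by positivity) hδ₁ hr0 hr1 hR
  have hmain : (c d / δ₁) ^ r * T ^ r ≤ ((d:ℝ) ^ (m - d) / δ₁) ^ r * (n:ℝ) ^ (1 / 2 : ℝ) := by
    rw [← Real.mul_rpow (by positivity) hT0, ← hdr, Real.rpow_mul hn0.le, Real.rpow_natCast,
      ← Real.mul_rpow (by positivity) (by positivity)]
    refine Real.rpow_le_rpow (by positivity) ?_ hr0
    calc c d / δ₁ * T ≤ c d / δ₁ := mul_le_of_le_one_right (by positivity) hT1
      _ ≤ (d:ℝ) ^ (m - d) / δ₁ * (n:ℝ) ^ d := by rw [div_mul_eq_mul_div]; gcongr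
  have hexp_main : 1 / n * (1 / n) * (n:ℝ) ^ (1 / 2 : ℝ) ≤ (n:ℝ) ^ (-(1 / 2 : ℝ) * (1 + r)) := by
    rw [one_div, ← Real.rpow_neg_one, ← Real.rpow_add hn0, ← Real.rpow_add hn0]
    exact Real.rpow_le_rpow_of_exponent_le (by linarith) (by linarith)
  have hexp_tail : 1 / n * (n:ℝ) ^ (((d:ℝ) - 1 / 2) * r) = (n:ℝ) ^ (-(1 / 2 : ℝ) * (1 + r)) := by
    rw [one_div, ← Real.rpow_neg_one, ← Real.rpow_add hn0]
    congr 1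
    linear_combination hdr
  calc Rb n d m c δ₁ δ₂ S = 1 / n * √(n / (n - 1)) * (1 / δ₁ * (S + epsN n d c δ₂)) ^ r := rfl
    _ ≤ 1 / n * (1 + 1 / n) *
          ((c d / δ₁) ^ r * T ^ r + (K / δ₁) ^ r * (n:ℝ) ^ (((d:ℝ) - 1 / 2) * r)) := by
        gcongr
        exact sqrt_div_sub_one_le hn2
    _ = 1 / n * (c d / δ₁) ^ r * T ^ r + 1 / n * (1 / n) * ((c d / δ₁) ^ r * T ^ r) +
          (1 + 1 / n) * (K / δ₁) ^ r * (1 / n * (n:ℝ) ^ (((d:ℝ) - 1 / 2) * r)) := by ring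
    _ ≤ 1 / n * (c d / δ₁) ^ r * T ^ r +
          ((d:ℝ) ^ (m - d) / δ₁) ^ r * (1 / n * (1 / n) * (n:ℝ) ^ (1 / 2 : ℝ)) +
          2 * (K / δ₁) ^ r * (1 / n * (n:ℝ) ^ (((d:ℝ) - 1 / 2) * r)) := by
        have h2 : 1 + 1 / (n:ℝ) ≤ 2 := by
          have : 1 / (n:ℝ) ≤ 1 := by rw [div_le_one hn0]; linarith
          linarith
        refine add_le_add (add_le_add le_rfl ?_) ?_
        · exact (mul_le_mul_of_nonneg_left hmain (by positivity)).trans_eq (by ring)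
        · exact mul_le_mul_of_nonneg_right
            (mul_le_mul_of_nonneg_right h2 (by positivity)) (by positivity)
    _ ≤ 1 / n * (c d / δ₁) ^ r * T ^ r +
          (((d:ℝ) ^ (m - d) / δ₁) ^ r + 2 * (K / δ₁) ^ r) * (n:ℝ) ^ (-(1 / 2 : ℝ) * (1 + r)) := by
        have := mul_le_mul_of_nonneg_left hexp_main
          (by positivity : 0 ≤ ((d:ℝ) ^ (m - d) / δ₁) ^ r)
        rw [hexp_tail]
        linarith

theorem R_bound_simplified_general
    {𝒳 : Type*} [DecidableEq 𝒳]
    [MeasurableSpace 𝒳]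
    {Ω : Type*} [MeasureSpace Ω]
    (p : 𝒳 → ℝ)
    (m : ℕ) (hm : Even m) (hm0 : 0 < m) (d : ℕ) (hd : d = m / 2)
    (δ₁ δ₂ : ℝ) (hδ₁ : δ₁ ∈ Set.Ioo (0:ℝ) 1)
    (c : ℕ → ℕ → ℝ)
    (hcnonneg : ∀ n : ℕ, ∀ k ∈ Finset.Icc 1 d, 0 ≤ c n k)
    (hcgrowth : ∀ n : ℕ, ∀ k ∈ Finset.Icc 1 d, c n k ≤ (k:ℝ)^(m-k) * (n:ℝ)^k) :
    ∃ C : ℝ, 0 < C ∧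
      ∀ n : ℕ, 2 ≤ n →
        ∀ X : Fin n → Ω → 𝒳, (∀ i, Measurable (X i)) →
          iIndepFun X ℙ →
          (∀ i u, (ℙ {ω | X i ω = u}).toReal = p u) →
          ∀ ω : Ω,
            Rb n d m (c n) δ₁ δ₂ (empSum d (c n) X ω) ≤
              (1/(n:ℝ)) * (c n d / δ₁) ^ ((1:ℝ)/(m:ℝ)) *
                (∑' u, (emp X ω u * (1 - emp X ω u))^d) ^ ((1:ℝ)/(m:ℝ))
              + C * (n:ℝ) ^ (-(1/2 : ℝ) * (1 + 1/(m:ℝ))) := by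
  have hmd : m = 2 * d := by
    obtain ⟨t, rfl⟩ := hm
    omega
  have hd0 : d ≠ 0 := by omega
  have hdmem : d ∈ Icc 1 d := mem_Icc.2 ⟨Nat.one_le_iff_ne_zero.2 hd0, le_rfl⟩
  have hδ₁0 : 0 < δ₁ := hδ₁.1
  have hK := remainderCoeff_nonneg m d δ₂
  have hC₁ : 0 < ((d:ℝ) ^ (m - d) / δ₁) ^ (1 / m : ℝ) :=
    Real.rpow_pos_of_pos (div_pos (pow_pos (by exact_mod_cast Nat.pos_of_ne_zero hd0) _) hδ₁0) _
  have hC₂ : 0 ≤ 2 * (remainderCoeff m d δ₂ / δ₁) ^ (1 / m : ℝ) :=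
    mul_nonneg zero_le_two (Real.rpow_nonneg (div_nonneg hK hδ₁0.le) _)
  refine ⟨_, add_pos_of_pos_of_nonneg hC₁ hC₂, fun n hn X _ _ _ ω => ?_⟩
  have hn0 : n ≠ 0 := by omega
  have hR0 := add_nonneg (empSum_nonneg X ω (hcnonneg n)) (epsN_nonneg (n := n) (hcnonneg n) δ₂)
  have hR := empSum_add_epsN_le X ω hn0 hd0 (hcnonneg n) (hcgrowth n) δ₂
  exact Rb_le_of_radicand_le hn hmd hd0 hδ₁0 hK (empVarSum_nonneg X ω d)
    (empVarSum_le_one X ω hn0 hd0) (hcnonneg n d hdmem) (hcgrowth n d hdmem) hR0 hR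

/-- **Corollary 1 (simplified data-dependent bound).** There is a constant `C > 0`
depending only on `m, δ₁, δ₂` such that for every `n ≥ 2`, coefficients `c n` satisfying the
moment identity and the growth bound `c_{k,m,n} ≤ k^{m-k} n^k`, and every realization of the
i.i.d. sample,
`R_{δ₁,δ₂,m}(Xⁿ) ≤ (1/n)(c_{d,m,n}/δ₁)^{1/m} (∑_u (p̂_u(1-p̂_u))^{m/2})^{1/m}
  + C n^{-(1/2)(1+1/m)}`. -/
theorem R_bound_simplified
    {𝒳 : Type*} [Countable 𝒳] [DecidableEq 𝒳]
    [MeasurableSpace 𝒳] [MeasurableSingletonClass 𝒳]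
    {Ω : Type*} [MeasureSpace Ω] [IsProbabilityMeasure (ℙ : Measure Ω)]
    (p : 𝒳 → ℝ) (hp0 : ∀ u, 0 ≤ p u) (hp1 : ∑' u, p u = 1)
    (m : ℕ) (hm : Even m) (hm0 : 0 < m) (d : ℕ) (hd : d = m / 2)
    (δ₁ δ₂ : ℝ) (hδ₁ : δ₁ ∈ Set.Ioo (0:ℝ) 1) (hδ₂ : δ₂ ∈ Set.Ioo (0:ℝ) 1)
    (c : ℕ → ℕ → ℝ)
    (hc : ∀ n : ℕ, MomentIdentity n m d (c n))
    (hcnonneg : ∀ n : ℕ, ∀ k ∈ Finset.Icc 1 d, 0 ≤ c n k)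
    (hcgrowth : ∀ n : ℕ, ∀ k ∈ Finset.Icc 1 d, c n k ≤ (k:ℝ)^(m-k) * (n:ℝ)^k) :
    ∃ C : ℝ, 0 < C ∧
      ∀ n : ℕ, 2 ≤ n →
        ∀ X : Fin n → Ω → 𝒳, (∀ i, Measurable (X i)) →
          iIndepFun X ℙ →
          (∀ i u, (ℙ {ω | X i ω = u}).toReal = p u) →
          ∀ ω : Ω,
            Rb n d m (c n) δ₁ δ₂ (empSum d (c n) X ω) ≤
              (1/(n:ℝ)) * (c n d / δ₁) ^ ((1:ℝ)/(m:ℝ)) *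
                (∑' u, (emp X ω u * (1 - emp X ω u))^d) ^ ((1:ℝ)/(m:ℝ))
              + C * (n:ℝ) ^ (-(1/2 : ℝ) * (1 + 1/(m:ℝ))) :=
  R_bound_simplified_general p m hm hm0 d hd δ₁ δ₂ hδ₁ c hcnonneg hcgrowth
end

section
/- Let p be a probability distribution on a countable alphabet X, and let p_[1] = max_{u∈X} p_u denote its largest element (the maximum is attained since Σ_u p_u = 1). Then p_[1]·(1 − p_[1]) = sup_{u∈X} p_u·(1 − p_u). -/
/-- **Proposition 2.** For a probability distribution `p` on a countable alphabet whose
maximum is attained at `s` (so `p_s = p_[1]`), one has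
`p_[1](1 - p_[1]) = sup_u p_u(1 - p_u)`. -/
theorem max_prob_maximizes_variance_term
    {𝒳 : Type*} [Countable 𝒳] (p : 𝒳 → ℝ)
    (hp0 : ∀ u, 0 ≤ p u) (hp1 : ∑' u, p u = 1)
    (s : 𝒳) (hs : ∀ u, p u ≤ p s) :
    p s * (1 - p s) = ⨆ u, p u * (1 - p u) := by
  classical
  have : Nonempty 𝒳 := ⟨s⟩
  have hsum : Summable p := by
    by_contra h
    rw [tsum_eq_zero_of_not_summable h] at hp1
    norm_num at hp1
  have key : ∀ u, u ≠ s → p u + p s ≤ 1 := by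
    intro u hu
    have h1 := Summable.sum_le_tsum {u, s} (fun i _ => hp0 i) hsum
    rw [Finset.sum_pair hu, hp1] at h1
    exact h1
  have bound : ∀ u, p u * (1 - p u) ≤ p s * (1 - p s) := by
    intro u
    by_cases h : u = s
    · subst h; exact le_rfl
    · nlinarith [hs u, key u h, hp0 u]
  refine le_antisymm ?_ (ciSup_le bound)
  exact le_ciSup ⟨p s * (1 - p s), by rintro x ⟨u, rfl⟩; exact bound u⟩ s
end
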